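/- arXiv:2112.14945 — 4 statements merged into one kernel-verified Lean document; each statement's English description precedes it below -/
import Mathlib

section
/- Let A be an n×n real symmetric matrix in which every row and every column has 0 as its minimal entry, and let A⁺ be the (n+1)×(n+1) real symmetric matrix obtained from A by adjoining a new first row and first column all of whose entries are 0. Then: (1) if A has symmetric tropical rank two, so does A⁺; and (2) if A has symmetric Kapranov rank two, so does A⁺. -/
/-!
Common definitions for tropical geometry of symmetric matrices, following
Develin–Santos–Sturmfels and the paper under formalization.
-/

open Matrix

noncomputable section

/-- The field `K` of Hahn series over `ℂ` with value group `ℝ`. -/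
abbrev K : Type := HahnSeries ℝ ℂ

/-- The multiset of unordered pairs `{row s, col (σ s)}` (the "monomial") associated to the
bijection, from the row indices to the column indices, determined by the permutation `σ`. -/
def tropPairs {n r : ℕ} (row col : Fin r → Fin n) (σ : Equiv.Perm (Fin r)) :
    Multiset (Sym2 (Fin n)) :=
  Finset.univ.val.map fun s => Sym2.mk (row s) (col (σ s))

/-- The value `∑ s, A (row s) (col (σ s))` of the bijection determined by `σ` on the
submatrix of `A` with row indices `row` and column indices `col`. -/
def tropVal {n r : ℕ} (A : Matrix (Fin n) (Fin n) ℝ) (row col : Fin r → Fin n)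
    (σ : Equiv.Perm (Fin r)) : ℝ :=
  ∑ s, A (row s) (col (σ s))

/-- The bijection determined by `σ` is minimizing for the submatrix of `A` given by
`row`, `col`. -/
def Minimizing {n r : ℕ} (A : Matrix (Fin n) (Fin n) ℝ) (row col : Fin r → Fin n)
    (σ : Equiv.Perm (Fin r)) : Prop :=
  ∀ τ : Equiv.Perm (Fin r), tropVal A row col σ ≤ tropVal A row col τ

/-- The submatrix of `A` given by `row`, `col` is tropically singular: at least two distinct
bijections are minimizing. -/
def TropSing {n r : ℕ} (A : Matrix (Fin n) (Fin n) ℝ) (row col : Fin r → Fin n) : Prop :=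
  ∃ σ τ : Equiv.Perm (Fin r), σ ≠ τ ∧ Minimizing A row col σ ∧ Minimizing A row col τ

/-- The submatrix of `A` given by `row`, `col` is symmetrically tropically singular:
two bijections with distinct monomials (multisets of unordered pairs) are both minimizing. -/
def SymTropSing {n r : ℕ} (A : Matrix (Fin n) (Fin n) ℝ) (row col : Fin r → Fin n) : Prop :=
  ∃ σ τ : Equiv.Perm (Fin r), tropPairs row col σ ≠ tropPairs row col τ ∧
    Minimizing A row col σ ∧ Minimizing A row col τ

/-- The tropical rank of `A`: the largest `r` such that some `r × r` submatrix of `A`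
(given by strictly increasing row and column indices) is not tropically singular. -/
def tropicalRank {n : ℕ} (A : Matrix (Fin n) (Fin n) ℝ) : ℕ :=
  sSup {r | ∃ row col : Fin r → Fin n, StrictMono row ∧ StrictMono col ∧ ¬ TropSing A row col}

/-- The symmetric tropical rank of `A`: the largest `r` such that some `r × r` submatrix of `A`
is not symmetrically tropically singular. -/
def symTropicalRank {n : ℕ} (A : Matrix (Fin n) (Fin n) ℝ) : ℕ :=
  sSup {r | ∃ row col : Fin r → Fin n, StrictMono row ∧ StrictMono col ∧ ¬ SymTropSing A row col}

/-- `B` is a lift of the real matrix `A` over the Hahn series field `K`: all entries of `B`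
are nonzero and the degree (least exponent of the support, `HahnSeries.order`) of `B i j`
equals `A i j`. -/
def IsLift {n : ℕ} (A : Matrix (Fin n) (Fin n) ℝ) (B : Matrix (Fin n) (Fin n) K) : Prop :=
  ∀ i j, B i j ≠ 0 ∧ (B i j).order = A i j

/-- The Kapranov rank of `A`: the minimum rank of a lift of `A`. -/
def kapranovRank {n : ℕ} (A : Matrix (Fin n) (Fin n) ℝ) : ℕ :=
  sInf {r | ∃ B : Matrix (Fin n) (Fin n) K, IsLift A B ∧ B.rank = r}

/-- The symmetric Kapranov rank of `A`: the minimum rank of a symmetric lift of `A`. -/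
def symKapranovRank {n : ℕ} (A : Matrix (Fin n) (Fin n) ℝ) : ℕ :=
  sInf {r | ∃ B : Matrix (Fin n) (Fin n) K, IsLift A B ∧ B.IsSymm ∧ B.rank = r}

/-- Two permutations are cycle-similar if every cycle factor of either one is a cycle factor
of the other or the inverse of such. -/
def CycleSimilar {α : Type*} [Fintype α] [DecidableEq α] (σ τ : Equiv.Perm α) : Prop :=
  (∀ c ∈ σ.cycleFactorsFinset, c ∈ τ.cycleFactorsFinset ∨ c⁻¹ ∈ τ.cycleFactorsFinset) ∧
  (∀ c ∈ τ.cycleFactorsFinset, c ∈ σ.cycleFactorsFinset ∨ c⁻¹ ∈ σ.cycleFactorsFinset)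

/-- The multiset of unordered pairs `{i, σ i}` of a permutation `σ` of `Fin n`. -/
def permPairs {n : ℕ} (σ : Equiv.Perm (Fin n)) : Multiset (Sym2 (Fin n)) :=
  Finset.univ.val.map fun i => Sym2.mk i (σ i)

/-- The value `∑ i, A i (σ i)` of a permutation `σ` on the full matrix `A`. -/
def permVal {n : ℕ} (A : Matrix (Fin n) (Fin n) ℝ) (σ : Equiv.Perm (Fin n)) : ℝ :=
  ∑ i, A i (σ i)

/-- `σ` attains the minimum of `∑ i, A i (σ i)` over all permutations. -/
def PermMinimizing {n : ℕ} (A : Matrix (Fin n) (Fin n) ℝ) (σ : Equiv.Perm (Fin n)) : Prop :=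
  ∀ τ : Equiv.Perm (Fin n), permVal A σ ≤ permVal A τ


/-! ### Auxiliary lemmas -/

section Aux

variable {N r : ℕ}

private lemma msum_update_two {X : Type*} [DecidableEq X] (f g : Fin r → X) (a b : Fin r)
    (hab : a ≠ b) (hfg : ∀ s, s ≠ a → s ≠ b → f s = g s) :
    Finset.univ.val.map g + {f a, f b} = Finset.univ.val.map f + {g a, g b} := by
  classical
  have hbmem : b ∈ (Finset.univ.erase a : Finset (Fin r)) := by
    simp [Finset.mem_erase, hab.symm]
  have huniv : (Finset.univ : Finset (Fin r)).val
      = a ::ₘ b ::ₘ ((Finset.univ.erase a).erase b).val := by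
    rw [Finset.erase_val, Finset.erase_val, Multiset.cons_erase, Multiset.cons_erase]
    · simp
    · rw [← Finset.erase_val]; exact hbmem
  have hcongr : Multiset.map f ((Finset.univ.erase a).erase b).val
      = Multiset.map g ((Finset.univ.erase a).erase b).val := by
    apply Multiset.map_congr rfl
    intro s hs
    rw [← Finset.mem_def] at hs
    simp only [Finset.mem_erase] at hs
    exact hfg s hs.2.1 hs.1
  rw [huniv]
  simp only [Multiset.map_cons]
  rw [hcongr]
  have : ∀ (x y u v : X) (M : Multiset X), x ::ₘ y ::ₘ M + {u, v} = u ::ₘ v ::ₘ M + {x, y} := by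
    intro x y u v M
    have h1 : ({u, v} : Multiset X) = u ::ₘ v ::ₘ 0 := rfl
    have h2 : ({x, y} : Multiset X) = x ::ₘ y ::ₘ 0 := rfl
    rw [h1, h2]
    simp only [← Multiset.singleton_add]
    abel
  exact this _ _ _ _ _

private lemma msum_update_one {X : Type*} [DecidableEq X] (f g : Fin r → X) (a : Fin r)
    (hfg : ∀ s, s ≠ a → f s = g s) :
    Finset.univ.val.map g + {f a} = Finset.univ.val.map f + {g a} := by
  classical
  have huniv : (Finset.univ : Finset (Fin r)).val = a ::ₘ (Finset.univ.erase a).val := by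
    rw [Finset.erase_val, Multiset.cons_erase]; simp
  have hcongr : Multiset.map f (Finset.univ.erase a).val
      = Multiset.map g (Finset.univ.erase a).val := by
    apply Multiset.map_congr rfl
    intro s hs
    rw [← Finset.mem_def] at hs
    simp only [Finset.mem_erase] at hs
    exact hfg s hs.1
  rw [huniv]
  simp only [Multiset.map_cons]
  rw [hcongr]
  have : ∀ (x u : X) (M : Multiset X), x ::ₘ M + {u} = u ::ₘ M + {x} := by
    intro x u M
    simp only [← Multiset.singleton_add]
    abel
  exact this _ _ _

private lemma rsum_update_two (f g : Fin r → ℝ) (a b : Fin r)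
    (hab : a ≠ b) (hfg : ∀ s, s ≠ a → s ≠ b → f s = g s) :
    ∑ s, g s + (f a + f b) = ∑ s, f s + (g a + g b) := by
  classical
  have hbmem : b ∈ (Finset.univ.erase a : Finset (Fin r)) := by
    simp [Finset.mem_erase, hab.symm]
  have h1 : ∑ s, f s = f a + (f b + ∑ s ∈ (Finset.univ.erase a).erase b, f s) := by
    rw [Finset.add_sum_erase _ _ hbmem, Finset.add_sum_erase _ _ (Finset.mem_univ a)]
  have h2 : ∑ s, g s = g a + (g b + ∑ s ∈ (Finset.univ.erase a).erase b, g s) := by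
    rw [Finset.add_sum_erase _ _ hbmem, Finset.add_sum_erase _ _ (Finset.mem_univ a)]
  have h3 : ∑ s ∈ (Finset.univ.erase a).erase b, f s
      = ∑ s ∈ (Finset.univ.erase a).erase b, g s := by
    apply Finset.sum_congr rfl
    intro s hs
    simp only [Finset.mem_erase] at hs
    exact hfg s hs.2.1 hs.1
  rw [h1, h2, h3]; ring

end Aux

/-! ### Tropical swap machinery -/

section Trop

variable {N r : ℕ} (M : Matrix (Fin N) (Fin N) ℝ) (row col : Fin r → Fin N)

private lemma tropVal_swap (σ : Equiv.Perm (Fin r)) (a b : Fin r) (hab : a ≠ b) :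
    tropVal M row col (σ * Equiv.swap a b)
      + (M (row a) (col (σ a)) + M (row b) (col (σ b)))
    = tropVal M row col σ
      + (M (row a) (col (σ b)) + M (row b) (col (σ a))) := by
  classical
  have := rsum_update_two (fun s => M (row s) (col (σ s)))
    (fun s => M (row s) (col (σ (Equiv.swap a b s)))) a b hab
    (fun s hsa hsb => by simp [Equiv.swap_apply_of_ne_of_ne hsa hsb])
  simpa [tropVal, Equiv.Perm.mul_apply, Equiv.swap_apply_left, Equiv.swap_apply_right] using this

private lemma tropPairs_swap (σ : Equiv.Perm (Fin r)) (a b : Fin r) (hab : a ≠ b) :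
    tropPairs row col (σ * Equiv.swap a b)
      + {Sym2.mk (row a) (col (σ a)), Sym2.mk (row b) (col (σ b))}
    = tropPairs row col σ
      + {Sym2.mk (row a) (col (σ b)), Sym2.mk (row b) (col (σ a))} := by
  classical
  have := msum_update_two (fun s => Sym2.mk (row s) (col (σ s)))
    (fun s => Sym2.mk (row s) (col (σ (Equiv.swap a b s)))) a b hab
    (fun s hsa hsb => by simp [Equiv.swap_apply_of_ne_of_ne hsa hsb])
  simpa [tropPairs, Equiv.Perm.mul_apply, Equiv.swap_apply_left, Equiv.swap_apply_right] using this

private lemma pair_multiset_ne {X : Type*} [DecidableEq X] {x y u v : X}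
    (h1 : x ≠ u) (h2 : x ≠ v) : ({x, y} : Multiset X) ≠ {u, v} := by
  intro h
  have hx : x ∈ ({x, y} : Multiset X) := by simp
  rw [h] at hx
  simp only [Multiset.insert_eq_cons, Multiset.mem_cons, Multiset.mem_singleton] at hx
  tauto

/-- The swap-exchange criterion for symmetric tropical singularity. -/
private lemma symTropSing_of_swap {σ : Equiv.Perm (Fin r)}
    (hmin : Minimizing M row col σ) (a b : Fin r) (hab : a ≠ b)
    (hval : M (row a) (col (σ b)) + M (row b) (col (σ a))
      ≤ M (row a) (col (σ a)) + M (row b) (col (σ b)))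
    (hpair : ({Sym2.mk (row a) (col (σ a)), Sym2.mk (row b) (col (σ b))} :
        Multiset (Sym2 (Fin N)))
      ≠ {Sym2.mk (row a) (col (σ b)), Sym2.mk (row b) (col (σ a))}) :
    SymTropSing M row col := by
  classical
  set τ := σ * Equiv.swap a b with hτ
  have hv := tropVal_swap M row col σ a b hab
  have hvle : tropVal M row col τ ≤ tropVal M row col σ := by
    have := hv ▸ (add_le_add_right hval (tropVal M row col (σ * Equiv.swap a b)))
    -- τ + old ≤ σ + old' doesn't directly work; do arithmetic
    nlinarith [hv, hval]
  have hminτ : Minimizing M row col τ := fun ρ => le_trans hvle (hmin ρ)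
  refine ⟨σ, τ, ?_, hmin, hminτ⟩
  intro h
  have hp := tropPairs_swap row col σ a b hab
  rw [← h] at hp
  exact hpair (add_left_cancel hp)

private lemma mem_tropPairs_iff {z : Sym2 (Fin N)} {σ : Equiv.Perm (Fin r)} :
    z ∈ tropPairs row col σ ↔ ∃ s, Sym2.mk (row s) (col (σ s)) = z := by
  simp [tropPairs, Multiset.mem_map, List.mem_ofFn]

private lemma count_tropPairs (z : Sym2 (Fin N)) (σ : Equiv.Perm (Fin r)) :
    Multiset.count z (tropPairs row col σ)
      = (Finset.univ.filter (fun s => z = Sym2.mk (row s) (col (σ s)))).card := by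
  classical
  rw [tropPairs, Multiset.count_map, ← Finset.filter_val, Finset.card_def]

/-- a minimizer always exists -/
private lemma exists_minimizing : ∃ σ, Minimizing M row col σ := by
  classical
  obtain ⟨σ, -, hσ⟩ := Finset.exists_min_image (Finset.univ : Finset (Equiv.Perm (Fin r)))
    (tropVal M row col) ⟨1, Finset.mem_univ 1⟩
  exact ⟨σ, fun τ => hσ τ (Finset.mem_univ τ)⟩

end Trop

/-! ### Transpose and reindexing invariance -/

section Reindex

variable {N r : ℕ} (M : Matrix (Fin N) (Fin N) ℝ) (row col : Fin r → Fin N)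

private lemma univ_val_map_perm (π : Equiv.Perm (Fin r)) :
    Multiset.map (⇑π) (Finset.univ : Finset (Fin r)).val = (Finset.univ : Finset (Fin r)).val := by
  have := Finset.map_univ_equiv π
  calc Multiset.map (⇑π) Finset.univ.val
      = (Finset.univ.map π.toEmbedding).val := by rw [Finset.map_val]; rfl
    _ = Finset.univ.val := by rw [this]

private lemma tropVal_comp (π ρ : Equiv.Perm (Fin r)) (τ : Equiv.Perm (Fin r)) :
    tropVal M (row ∘ ⇑π) (col ∘ ⇑ρ) τ = tropVal M row col (ρ * τ * π⁻¹) := by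
  unfold tropVal
  rw [← Equiv.sum_comp π (fun t => M (row t) (col ((ρ * τ * π⁻¹) t)))]
  apply Finset.sum_congr rfl
  intro s _
  simp [Equiv.Perm.mul_apply]

private lemma tropPairs_comp (π ρ : Equiv.Perm (Fin r)) (τ : Equiv.Perm (Fin r)) :
    tropPairs (row ∘ ⇑π) (col ∘ ⇑ρ) τ = tropPairs row col (ρ * τ * π⁻¹) := by
  unfold tropPairs
  conv_rhs => rw [← univ_val_map_perm π]
  rw [Multiset.map_map]
  apply Multiset.map_congr rfl
  intro s _
  simp [Equiv.Perm.mul_apply]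

private lemma minimizing_comp (π ρ : Equiv.Perm (Fin r)) (τ : Equiv.Perm (Fin r))
    (h : Minimizing M row col (ρ * τ * π⁻¹)) : Minimizing M (row ∘ ⇑π) (col ∘ ⇑ρ) τ := by
  intro υ
  rw [tropVal_comp, tropVal_comp]
  exact h _

private lemma symTropSing_comp (π ρ : Equiv.Perm (Fin r))
    (h : SymTropSing M row col) : SymTropSing M (row ∘ ⇑π) (col ∘ ⇑ρ) := by
  obtain ⟨σ, τ, hne, h1, h2⟩ := h
  refine ⟨ρ⁻¹ * σ * π, ρ⁻¹ * τ * π, ?_, ?_, ?_⟩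
  · rw [tropPairs_comp, tropPairs_comp]
    have e1 : ρ * (ρ⁻¹ * σ * π) * π⁻¹ = σ := by group
    have e2 : ρ * (ρ⁻¹ * τ * π) * π⁻¹ = τ := by group
    rw [e1, e2]; exact hne
  · apply minimizing_comp
    have e1 : ρ * (ρ⁻¹ * σ * π) * π⁻¹ = σ := by group
    rw [e1]; exact h1
  · apply minimizing_comp
    have e2 : ρ * (ρ⁻¹ * τ * π) * π⁻¹ = τ := by group
    rw [e2]; exact h2

private lemma symTropSing_comp_iff (π ρ : Equiv.Perm (Fin r)) :
    SymTropSing M (row ∘ ⇑π) (col ∘ ⇑ρ) ↔ SymTropSing M row col := by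
  constructor
  · intro h
    have := symTropSing_comp M (row ∘ ⇑π) (col ∘ ⇑ρ) π⁻¹ ρ⁻¹ h
    have hrw : (row ∘ ⇑π) ∘ ⇑π⁻¹ = row := by
      funext s; simp
    have hrw2 : (col ∘ ⇑ρ) ∘ ⇑ρ⁻¹ = col := by
      funext s; simp
    rwa [hrw, hrw2] at this
  · exact symTropSing_comp M row col π ρ

/-- transpose: if `M` is symmetric, singularity of the transposed submatrix gives
singularity of the original -/
private lemma symTropSing_transpose (hsym : ∀ i j, M i j = M j i)
    (h : SymTropSing M col row) : SymTropSing M row col := by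
  classical
  have key : ∀ γ : Equiv.Perm (Fin r),
      tropVal M row col γ⁻¹ = tropVal M col row γ ∧
      tropPairs row col γ⁻¹ = tropPairs col row γ := by
    intro γ
    constructor
    · unfold tropVal
      rw [← Equiv.sum_comp γ (fun s => M (row s) (col (γ⁻¹ s)))]
      apply Finset.sum_congr rfl
      intro s _
      simp [hsym (row (γ s)) (col s)]
    · unfold tropPairs
      conv_lhs => rw [← univ_val_map_perm γ]
      rw [Multiset.map_map]
      apply Multiset.map_congr rfl
      intro s _
      simp only [Function.comp_apply, Equiv.Perm.inv_def, Equiv.symm_apply_apply]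
      exact (Sym2.eq_swap)
  obtain ⟨σ, τ, hne, h1, h2⟩ := h
  refine ⟨σ⁻¹, τ⁻¹, ?_, ?_, ?_⟩
  · rw [(key σ).2, (key τ).2]; exact hne
  · intro υ
    rw [(key σ).1]
    calc tropVal M col row σ ≤ tropVal M col row υ⁻¹ := h1 υ⁻¹
      _ = tropVal M row col υ := by
          have := (key υ⁻¹).1
          rw [inv_inv] at this
          exact this.symm
  · intro υ
    rw [(key τ).1]
    calc tropVal M col row τ ≤ tropVal M col row υ⁻¹ := h2 υ⁻¹
      _ = tropVal M row col υ := by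
          have := (key υ⁻¹).1
          rw [inv_inv] at this
          exact this.symm

/-- every injection sorts as a strictly monotone map composed with a permutation -/
private lemma exists_strictMono_comp (f : Fin r → Fin N) (hf : Function.Injective f) :
    ∃ (g : Fin r → Fin N) (π : Equiv.Perm (Fin r)), StrictMono g ∧ f = g ∘ ⇑π := by
  classical
  set s : Finset (Fin N) := Finset.univ.image f with hs
  have hcard : s.card = r := by
    rw [hs, Finset.card_image_of_injective _ hf, Finset.card_univ, Fintype.card_fin]
  set g0 := s.orderIsoOfFin hcard with hg0
  have hmem : ∀ i, f i ∈ s := fun i => Finset.mem_image_of_mem f (Finset.mem_univ i)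
  set e : Fin r → {x // x ∈ s} := fun i => ⟨f i, hmem i⟩ with he
  have hebij : Function.Bijective e := by
    rw [Fintype.bijective_iff_injective_and_card]
    constructor
    · intro i j hij
      exact hf (congrArg Subtype.val hij)
    · simp [Fintype.card_coe, hcard]
  set eE := Equiv.ofBijective e hebij with heE
  refine ⟨fun i => (g0 i : Fin N), eE.trans g0.toEquiv.symm, ?_, ?_⟩
  · intro i j hij
    exact Subtype.coe_lt_coe.mpr (g0.strictMono hij)
  · funext i
    simp only [Function.comp_apply, Equiv.trans_apply]
    have : g0 (g0.toEquiv.symm (eE i)) = eE i := g0.toEquiv.apply_symm_apply (eE i)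
    rw [this]
    rfl

end Reindex

/-! ### Main tropical singularity lemmas -/

section MainTrop

variable {N r : ℕ}

private lemma case2 (M : Matrix (Fin (N+1)) (Fin (N+1)) ℝ)
    (hpos : ∀ i j, 0 ≤ M i j)
    (h0r : ∀ j, M 0 j = 0)
    (hzero : ∀ c : Fin (N+1), c ≠ 0 → ∃ p, p ≠ 0 ∧ M p c = 0)
    (HA : ∀ row col : Fin r → Fin (N+1), Function.Injective row → Function.Injective col →
      (∀ i, row i ≠ 0) → (∀ j, col j ≠ 0) → SymTropSing M row col)
    (row col : Fin r → Fin (N+1)) (hrow : Function.Injective row)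
    (hcol : Function.Injective col)
    (a : Fin r) (ha : row a = 0) (hc : ∀ j, col j ≠ 0) :
    SymTropSing M row col := by
  classical
  obtain ⟨σs, hmin⟩ := exists_minimizing M row col
  by_contra hns
  have hPuniq : ∀ τ, Minimizing M row col τ → tropPairs row col τ = tropPairs row col σs := by
    intro τ hτ
    by_contra hne
    exact hns ⟨σs, τ, Ne.symm hne, hmin, hτ⟩
  have hc0 : col (σs a) ≠ 0 := hc _
  obtain ⟨p, hp0, hpc⟩ := hzero (col (σs a)) hc0
  by_cases hpr : ∃ a', row a' = p
  · obtain ⟨a', ha'⟩ := hpr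
    have haa : a ≠ a' := by
      intro h
      rw [← h, ha] at ha'
      exact hp0 ha'.symm
    apply hns
    apply symTropSing_of_swap M row col hmin a a' haa
    · rw [ha, h0r, h0r, ha', hpc]
      simpa using hpos p (col (σs a'))
    · apply pair_multiset_ne
      · intro h
        rw [ha] at h
        rcases Sym2.eq_iff.mp h with ⟨_, h2⟩ | ⟨h1, _⟩
        · exact haa (σs.injective (hcol h2))
        · exact hc (σs a') h1.symm
      · intro h
        rw [ha, ha'] at h
        rcases Sym2.eq_iff.mp h with ⟨h1, _⟩ | ⟨h1, h2⟩
        · exact hp0 h1.symm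
        · exact hc0 h1.symm
  · push_neg at hpr
    set row' := Function.update row a p with hrow'def
    have hrow'a : row' a = p := Function.update_self a p row
    have hrow'ne : ∀ i, i ≠ a → row' i = row i := fun i hi => Function.update_of_ne hi p row
    have hrow'inj : Function.Injective row' := by
      intro i j hij
      by_cases hia : i = a <;> by_cases hja : j = a
      · rw [hia, hja]
      · rw [hia, hrow'a, hrow'ne j hja] at hij
        exact absurd hij.symm (hpr j)
      · rw [hja, hrow'a, hrow'ne i hia] at hij
        exact absurd hij (hpr i)
      · rw [hrow'ne i hia, hrow'ne j hja] at hij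
        exact hrow hij
    have hrow'0 : ∀ i, row' i ≠ 0 := by
      intro i
      by_cases hia : i = a
      · rw [hia, hrow'a]; exact hp0
      · rw [hrow'ne i hia]
        intro h
        exact hia (hrow (h.trans ha.symm))
    obtain ⟨σ, τ, hne, hmσ, hmτ⟩ := HA row' col hrow'inj hcol hrow'0 hc
    apply hne
    suffices hclaim : ∀ β, Minimizing M row' col β →
        tropPairs row' col β + {Sym2.mk ((0 : Fin (N+1))) (col (σs a))}
          = tropPairs row col σs + {Sym2.mk p (col (σs a))} by
      have e1 := hclaim σ hmσ
      have e2 := hclaim τ hmτ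
      exact add_right_cancel (e1.trans e2.symm)
    intro β hβ
    have hval_le : ∀ γ, tropVal M row col γ ≤ tropVal M row' col γ := by
      intro γ
      apply Finset.sum_le_sum
      intro s _
      show M (row s) (col (γ s)) ≤ M (row' s) (col (γ s))
      by_cases hsa : s = a
      · rw [hsa, ha, h0r]
        exact hpos _ _
      · rw [hrow'ne s hsa]
    have hval_σs : tropVal M row' col σs = tropVal M row col σs := by
      apply Finset.sum_congr rfl
      intro s _
      show M (row' s) (col (σs s)) = M (row s) (col (σs s))
      by_cases hsa : s = a
      · rw [hsa, hrow'a, hpc, ha, h0r]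
      · rw [hrow'ne s hsa]
    have h1 : tropVal M row' col β ≤ tropVal M row col σs := hval_σs ▸ hβ σs
    have h3 : tropVal M row col β = tropVal M row col σs :=
      le_antisymm (le_trans (hval_le β) h1) (hmin β)
    have hβmin : Minimizing M row col β := by
      intro ρ
      rw [h3]
      exact hmin ρ
    have hP := hPuniq β hβmin
    have hcβa : col (β a) = col (σs a) := by
      have hmem : Sym2.mk ((0 : Fin (N+1))) (col (β a)) ∈ tropPairs row col β := by
        rw [mem_tropPairs_iff]
        exact ⟨a, by rw [ha]⟩
      rw [hP, mem_tropPairs_iff] at hmem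
      obtain ⟨s, hs⟩ := hmem
      rcases Sym2.eq_iff.mp hs with ⟨h1', h2'⟩ | ⟨_, h2'⟩
      · have hsa : s = a := hrow (h1'.trans ha.symm)
        rw [← h2', hsa]
      · exact absurd h2' (hc (σs s))
    have hup := msum_update_one (fun s => Sym2.mk (row s) (col (β s)))
        (fun s => Sym2.mk (row' s) (col (β s))) a
        (fun s hsne => by simp only [hrow'ne s hsne])
    simp only [ha, hrow'a, hcβa] at hup
    have hup' : tropPairs row' col β + {Sym2.mk ((0 : Fin (N+1))) (col (σs a))}
        = tropPairs row col β + {Sym2.mk p (col (σs a))} := hup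
    rw [hP] at hup'
    exact hup'
end MainTrop

section Case4

variable {N r : ℕ}

private lemma case4claim (M : Matrix (Fin (N+1)) (Fin (N+1)) ℝ)
    (hsym : ∀ i j, M i j = M j i)
    (hpos : ∀ i j, 0 ≤ M i j)
    (h0r : ∀ j, M 0 j = 0)
    (row col : Fin r → Fin (N+1)) (hrow : Function.Injective row)
    (hcol : Function.Injective col)
    (a : Fin r) (ha : row a = 0) (b : Fin r) (hb : col b = 0)
    (σs : Equiv.Perm (Fin r)) (hmin : Minimizing M row col σs)
    (hPuniq : ∀ τ, Minimizing M row col τ → tropPairs row col τ = tropPairs row col σs)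
    (hkb : σs a ≠ b)
    (p : Fin (N+1)) (hp0 : p ≠ 0) (hpc : M p (col (σs a)) = 0)
    (q : Fin (N+1)) (hq0 : q ≠ 0) (hq : M (row (σs.symm b)) q = 0)
    (β : Equiv.Perm (Fin r))
    (hβ : Minimizing M (Function.update row a p) (Function.update col b q) β) :
    (tropPairs (Function.update row a p) (Function.update col b q) β
        + {Sym2.mk ((0:Fin (N+1))) (col (σs a)), Sym2.mk (row (σs.symm b)) ((0:Fin (N+1)))}
      = tropPairs row col σs
        + {Sym2.mk p (col (σs a)), Sym2.mk (row (σs.symm b)) q})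
    ∨ ((tropPairs (Function.update row a p) (Function.update col b q) β
        + {Sym2.mk ((0:Fin (N+1))) (row (σs.symm b)), Sym2.mk (col (σs a)) ((0:Fin (N+1)))}
      = tropPairs row col σs
        + {Sym2.mk p (row (σs.symm b)), Sym2.mk (col (σs a)) q})
      ∧ M p (row (σs.symm b)) = 0) := by
  classical
  have h0c : ∀ i, M i 0 = 0 := fun i => (hsym i 0).trans (h0r i)
  set is := σs.symm b with hisdef
  have his : σs is = b := σs.apply_symm_apply b
  have hisa : is ≠ a := fun h => hkb (by rw [← h]; exact his)
  have hrs0 : row is ≠ 0 := fun h => hisa (hrow (h.trans ha.symm))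
  have hck0 : col (σs a) ≠ 0 := fun h => hkb (hcol (h.trans hb.symm))
  set row' := Function.update row a p with hrow'def
  set col' := Function.update col b q with hcol'def
  have hrow'a : row' a = p := Function.update_self a p row
  have hrow'ne : ∀ i, i ≠ a → row' i = row i := fun i hi => Function.update_of_ne hi p row
  have hcol'b : col' b = q := Function.update_self b q col
  have hcol'ne : ∀ j, j ≠ b → col' j = col j := fun j hj => Function.update_of_ne hj q col
  have htermle : ∀ γ : Equiv.Perm (Fin r), ∀ s,
      M (row s) (col (γ s)) ≤ M (row' s) (col' (γ s)) := by
    intro γ s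
    by_cases hsa : s = a
    · rw [hsa, ha, h0r]; exact hpos _ _
    · by_cases hsb : γ s = b
      · rw [hsb, hb, h0c]; exact hpos _ _
      · rw [hrow'ne s hsa, hcol'ne _ hsb]
  have hval_le : ∀ γ, tropVal M row col γ ≤ tropVal M row' col' γ := fun γ =>
    Finset.sum_le_sum (fun s _ => htermle γ s)
  have hval_σs : tropVal M row' col' σs = tropVal M row col σs := by
    apply Finset.sum_congr rfl
    intro s _
    show M (row' s) (col' (σs s)) = M (row s) (col (σs s))
    by_cases hsa : s = a
    · rw [hsa, hrow'a, hcol'ne _ hkb, hpc, ha, h0r]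
    · by_cases hsis : s = is
      · rw [hsis, his, hrow'ne _ hisa, hcol'b, hq, hb, h0c]
      · have hsb : σs s ≠ b := fun h => hsis (σs.injective (by rw [his]; exact h))
        rw [hrow'ne s hsa, hcol'ne _ hsb]
  have hβle : tropVal M row' col' β ≤ tropVal M row col σs := hval_σs ▸ hβ σs
  have h3 : tropVal M row col β = tropVal M row col σs :=
    le_antisymm (le_trans (hval_le β) hβle) (hmin β)
  have h4 : tropVal M row' col' β = tropVal M row col σs :=
    le_antisymm hβle (h3 ▸ hval_le β)
  have hβmin : Minimizing M row col β := fun ρ => by rw [h3]; exact hmin ρ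
  have hP := hPuniq β hβmin
  have hterm : ∀ s, M (row' s) (col' (β s)) = M (row s) (col (β s)) := by
    have hsum : tropVal M row col β = tropVal M row' col' β := h3.trans h4.symm
    have := (Finset.sum_eq_sum_iff_of_le
      (fun s (_ : s ∈ Finset.univ) => htermle β s)).mp hsum
    exact fun s => (this s (Finset.mem_univ s)).symm
  have hβab : β a ≠ b := by
    intro h
    have hmem : Sym2.mk (row a) (col (β a)) ∈ tropPairs row col β :=
      (mem_tropPairs_iff row col).mpr ⟨a, rfl⟩
    rw [hP, mem_tropPairs_iff] at hmem
    obtain ⟨s, hs⟩ := hmem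
    rw [h, hb, ha] at hs
    rcases Sym2.eq_iff.mp hs with ⟨h1', h2'⟩ | ⟨h1', h2'⟩ <;>
    · have hsa : s = a := hrow (h1'.trans ha.symm)
      have hsb : σs s = b := hcol (h2'.trans hb.symm)
      exact hkb (hsa ▸ hsb)
  set v := β.symm b with hvdef
  have hv : β v = b := β.apply_symm_apply b
  have hvne : v ≠ a := fun h => hβab (by rw [← h]; exact hv)
  have hu : β a = σs a ∨ col (β a) = row is := by
    have hmem : Sym2.mk ((0:Fin (N+1))) (col (β a)) ∈ tropPairs row col β :=
      (mem_tropPairs_iff row col).mpr ⟨a, by rw [ha]⟩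
    rw [hP, mem_tropPairs_iff] at hmem
    obtain ⟨s, hs⟩ := hmem
    rcases Sym2.eq_iff.mp hs with ⟨h1', h2'⟩ | ⟨h1', h2'⟩
    · left
      have hsa : s = a := hrow (h1'.trans ha.symm)
      rw [hsa] at h2'
      exact (hcol h2').symm
    · right
      have hsb : σs s = b := hcol (h2'.trans hb.symm)
      have hsis : s = is := σs.injective (by rw [his]; exact hsb)
      rw [← h1', hsis]
  have hvv : v = is ∨ row v = col (σs a) := by
    have hmem : Sym2.mk (row v) ((0:Fin (N+1))) ∈ tropPairs row col β :=
      (mem_tropPairs_iff row col).mpr ⟨v, by rw [hv, hb]⟩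
    rw [hP, mem_tropPairs_iff] at hmem
    obtain ⟨s, hs⟩ := hmem
    rcases Sym2.eq_iff.mp hs with ⟨h1', h2'⟩ | ⟨h1', h2'⟩
    · left
      have hsv : s = v := hrow h1'
      have hsb : σs s = b := hcol (h2'.trans hb.symm)
      rw [← hsv]
      exact σs.injective (by rw [his]; exact hsb)
    · right
      have hsa : s = a := hrow (h1'.trans ha.symm)
      rw [← h2', hsa]
  have hdagger : tropPairs row' col' β
      + {Sym2.mk ((0:Fin (N+1))) (col (β a)), Sym2.mk (row v) ((0:Fin (N+1)))}
      = tropPairs row col σs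
      + {Sym2.mk p (col (β a)), Sym2.mk (row v) q} := by
    have hside : ∀ s, s ≠ a → s ≠ v →
        (fun s => Sym2.mk (row s) (col (β s))) s
          = (fun s => Sym2.mk (row' s) (col' (β s))) s := by
      intro s hsa hsv
      have hsb : β s ≠ b := fun h => hsv (β.injective (by rw [hv]; exact h))
      simp only []
      rw [hrow'ne s hsa, hcol'ne _ hsb]
    have hid := msum_update_two (fun s => Sym2.mk (row s) (col (β s)))
        (fun s => Sym2.mk (row' s) (col' (β s))) a v (Ne.symm hvne) hside
    have hid' : tropPairs row' col' β
        + {Sym2.mk (row a) (col (β a)), Sym2.mk (row v) (col (β v))}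
        = tropPairs row col β
        + {Sym2.mk (row' a) (col' (β a)), Sym2.mk (row' v) (col' (β v))} := hid
    rw [ha, hv, hb, hrow'a, hrow'ne v hvne, hcol'b, hcol'ne (β a) hβab, hP] at hid'
    exact hid'
  rcases hu with hu1 | hu2 <;> rcases hvv with hv1 | hv2
  · left
    rw [hu1, hv1] at hdagger
    exact hdagger
  · by_cases hrsc : row is = col (σs a)
    · left
      rw [hu1, hv2] at hdagger
      rw [← hrsc] at hdagger ⊢
      exact hdagger
    · exfalso
      set z := Sym2.mk ((0:Fin (N+1))) (col (σs a)) with hzdef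
      have hc2 : 2 ≤ Multiset.count z (tropPairs row col β) := by
        rw [count_tropPairs]
        refine Finset.one_lt_card.mpr ⟨a, ?_, v, ?_, Ne.symm hvne⟩
        · simp only [Finset.mem_filter, Finset.mem_univ, true_and]
          rw [ha, hu1]
        · simp only [Finset.mem_filter, Finset.mem_univ, true_and]
          rw [hv, hb, hv2]
          exact Sym2.eq_swap
      have hc1 : Multiset.count z (tropPairs row col σs) ≤ 1 := by
        rw [count_tropPairs]
        apply Finset.card_le_one.mpr
        have key : ∀ s ∈ Finset.univ.filter
            (fun s => z = Sym2.mk (row s) (col (σs s))), s = a := by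
          intro s hs
          simp only [Finset.mem_filter, Finset.mem_univ, true_and, hzdef] at hs
          rcases Sym2.eq_iff.mp hs with ⟨h1', _⟩ | ⟨h1', h2'⟩
          · exact hrow (h1'.symm.trans ha.symm)
          · exfalso
            have hsb : σs s = b := hcol (h1'.symm.trans hb.symm)
            have hsis : s = is := σs.injective (by rw [his]; exact hsb)
            exact hrsc (by rw [← hsis, ← h2'])
        intro s1 hs1 s2 hs2
        rw [key s1 hs1, key s2 hs2]
      rw [hP] at hc2
      omega
  · by_cases hrsc : row is = col (σs a)
    · left
      rw [hu2, hv1] at hdagger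
      rw [← hrsc]
      exact hdagger
    · exfalso
      set z := Sym2.mk ((0:Fin (N+1))) (row is) with hzdef
      have hc2 : 2 ≤ Multiset.count z (tropPairs row col β) := by
        rw [count_tropPairs]
        refine Finset.one_lt_card.mpr ⟨a, ?_, v, ?_, Ne.symm hvne⟩
        · simp only [Finset.mem_filter, Finset.mem_univ, true_and]
          rw [ha, hu2]
        · simp only [Finset.mem_filter, Finset.mem_univ, true_and]
          rw [hv, hb, hv1]
          exact Sym2.eq_swap
      have hc1 : Multiset.count z (tropPairs row col σs) ≤ 1 := by
        rw [count_tropPairs]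
        apply Finset.card_le_one.mpr
        have key : ∀ s ∈ Finset.univ.filter
            (fun s => z = Sym2.mk (row s) (col (σs s))), s = is := by
          intro s hs
          simp only [Finset.mem_filter, Finset.mem_univ, true_and, hzdef] at hs
          rcases Sym2.eq_iff.mp hs with ⟨h1', h2'⟩ | ⟨h1', h2'⟩
          · exfalso
            have hsa : s = a := hrow (h1'.symm.trans ha.symm)
            exact hrsc (by rw [h2', hsa])
          · have hsb : σs s = b := hcol (h1'.symm.trans hb.symm)
            exact σs.injective (by rw [his]; exact hsb)
        intro s1 hs1 s2 hs2
        rw [key s1 hs1, key s2 hs2]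
      rw [hP] at hc2
      omega
  · right
    constructor
    · rw [hu2, hv2] at hdagger
      exact hdagger
    · have htq := hterm a
      rw [hrow'a, hcol'ne (β a) hβab, hu2, ha, h0r] at htq
      exact htq

end Case4

private lemma cross_cancel {X : Type*} [DecidableEq X] {P A B : Multiset X}
    {x1 x2 y1 y2 u1 u2 w1 w2 : X}
    (hA : A + {x1, x2} = P + {y1, y2}) (hB : B + {u1, u2} = P + {w1, w2})
    (hswap : ({y1, y2} : Multiset X) + {u1, u2} = {w1, w2} + {x1, x2}) : A = B := by
  have h1 : A + ({x1, x2} + {u1, u2}) = P + ({y1, y2} + {u1, u2}) := by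
    rw [← add_assoc, hA, add_assoc]
  have h2 : B + ({u1, u2} + {x1, x2}) = P + ({w1, w2} + {x1, x2}) := by
    rw [← add_assoc, hB, add_assoc]
  rw [hswap] at h1
  rw [add_comm ({u1, u2} : Multiset X) ({x1, x2} : Multiset X)] at h2
  exact add_right_cancel (h1.trans h2.symm)

section Case4Main

variable {N r : ℕ}

private lemma case4 (M : Matrix (Fin (N+1)) (Fin (N+1)) ℝ)
    (hsym : ∀ i j, M i j = M j i)
    (hpos : ∀ i j, 0 ≤ M i j)
    (h0r : ∀ j, M 0 j = 0)
    (hzero : ∀ c : Fin (N+1), c ≠ 0 → ∃ p, p ≠ 0 ∧ M p c = 0)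
    (hr : 3 ≤ r)
    (HA : ∀ row col : Fin r → Fin (N+1), Function.Injective row → Function.Injective col →
      (∀ i, row i ≠ 0) → (∀ j, col j ≠ 0) → SymTropSing M row col)
    (row col : Fin r → Fin (N+1)) (hrow : Function.Injective row)
    (hcol : Function.Injective col)
    (a : Fin r) (ha : row a = 0) (b : Fin r) (hb : col b = 0) :
    SymTropSing M row col := by
  classical
  have h0c : ∀ i, M i 0 = 0 := fun i => (hsym i 0).trans (h0r i)
  have hrne : ∀ i, i ≠ a → row i ≠ 0 := fun i hi h => hi (hrow (h.trans ha.symm))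
  have hcne : ∀ j, j ≠ b → col j ≠ 0 := fun j hj h => hj (hcol (h.trans hb.symm))
  obtain ⟨σs, hmin⟩ := exists_minimizing M row col
  by_contra hns
  have hPuniq : ∀ τ, Minimizing M row col τ → tropPairs row col τ = tropPairs row col σs := by
    intro τ hτ
    by_contra hne
    exact hns ⟨σs, τ, Ne.symm hne, hmin, hτ⟩
  by_cases hkb : σs a = b
  · -- 4a
    obtain ⟨e, hea⟩ : ∃ e : Fin r, e ≠ a := by
      apply Fintype.exists_ne_of_one_lt_card
      simp only [Fintype.card_fin]
      omega
    apply hns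
    apply symTropSing_of_swap M row col hmin a e (Ne.symm hea)
    · rw [ha, h0r, h0r, hkb, hb, h0c]
      simpa using hpos (row e) (col (σs e))
    · apply pair_multiset_ne
      · intro h
        rw [ha, hkb, hb] at h
        rcases Sym2.eq_iff.mp h with ⟨_, h2⟩ | ⟨h1, _⟩
        · exact hcne (σs e) (fun hh => hea (σs.injective (hh.trans hkb.symm))) h2.symm
        · exact hcne (σs e) (fun hh => hea (σs.injective (hh.trans hkb.symm))) h1.symm
      · intro h
        rw [ha, hkb, hb] at h
        rcases Sym2.eq_iff.mp h with ⟨h1, _⟩ | ⟨_, h2⟩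
        · exact hrne e hea h1.symm
        · exact hrne e hea h2.symm
  · -- 4b
    have hck0 : col (σs a) ≠ 0 := hcne _ hkb
    have his : σs (σs.symm b) = b := σs.apply_symm_apply b
    have hisa : σs.symm b ≠ a := fun h => hkb (by rw [← h]; exact his)
    have hrs0 : row (σs.symm b) ≠ 0 := hrne _ hisa
    by_cases hrc : M (row (σs.symm b)) (col (σs a)) = 0
    · -- 4b-i
      apply hns
      apply symTropSing_of_swap M row col hmin a (σs.symm b) (Ne.symm hisa)
      · rw [ha, h0r, h0r, his, hb, h0c, hrc]
      · apply pair_multiset_ne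
        · intro h
          rw [ha, his, hb] at h
          rcases Sym2.eq_iff.mp h with ⟨_, h2⟩ | ⟨_, h2⟩ <;> exact hck0 h2
        · intro h
          rw [ha] at h
          rcases Sym2.eq_iff.mp h with ⟨h1, _⟩ | ⟨h1, _⟩
          · exact hrs0 h1.symm
          · exact hck0 h1.symm
    · by_cases hα : ∃ a', a' ≠ a ∧ M (row a') (col (σs a)) = 0
      · obtain ⟨a', haa, hz⟩ := hα
        apply hns
        apply symTropSing_of_swap M row col hmin a a' (Ne.symm haa)
        · rw [ha, h0r, h0r, hz]
          simpa using hpos (row a') (col (σs a'))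
        · apply pair_multiset_ne
          · intro h
            rw [ha] at h
            rcases Sym2.eq_iff.mp h with ⟨_, h2⟩ | ⟨_, h2⟩
            · exact haa (σs.injective (hcol h2)).symm
            · exact hck0 h2
          · intro h
            rw [ha] at h
            rcases Sym2.eq_iff.mp h with ⟨h1, _⟩ | ⟨h1, _⟩
            · exact hrne a' haa h1.symm
            · exact hck0 h1.symm
      · by_cases hβ : ∃ b', b' ≠ b ∧ M (row (σs.symm b)) (col b') = 0
        · obtain ⟨b', hbb, hz⟩ := hβ
          have hi2 : σs (σs.symm b') = b' := σs.apply_symm_apply b'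
          have hi2is : σs.symm b' ≠ σs.symm b := fun h => hbb (σs.symm.injective h)
          have hi2a : σs.symm b' ≠ a := by
            intro h
            apply hrc
            have hab' : σs a = b' := by rw [← h]; exact hi2
            rw [← hab'] at hz
            exact hz
          apply hns
          apply symTropSing_of_swap M row col hmin (σs.symm b) (σs.symm b') (Ne.symm hi2is)
          · rw [his, hi2, hb, hz, h0c, h0c]
            simpa using hpos (row (σs.symm b')) (col b')
          · apply pair_multiset_ne
            · intro h
              rw [his, hi2, hb] at h
              rcases Sym2.eq_iff.mp h with ⟨_, h2⟩ | ⟨_, h2⟩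
              · exact hcne b' hbb h2.symm
              · exact hrs0 h2.symm
            · intro h
              rw [his, hb] at h
              rcases Sym2.eq_iff.mp h with ⟨h1, _⟩ | ⟨h1, _⟩
              · exact hi2is (hrow h1).symm
              · exact hrs0 h1
        · -- gamma case
          push_neg at hα hβ
          obtain ⟨p, hp0, hpc⟩ := hzero (col (σs a)) hck0
          have hpnr : ∀ i, row i ≠ p := by
            intro i h
            have hia : i ≠ a := by
              intro h'
              rw [h', ha] at h
              exact hp0 h.symm
            exact hα i hia (by rw [h]; exact hpc)
          obtain ⟨q, hq0, hqrs⟩ := hzero (row (σs.symm b)) hrs0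
          have hrsq : M (row (σs.symm b)) q = 0 := by rw [hsym]; exact hqrs
          have hqnc : ∀ j, col j ≠ q := by
            intro j h
            have hjb : j ≠ b := by
              intro h'
              rw [h', hb] at h
              exact hq0 h.symm
            exact hβ j hjb (by rw [h]; exact hrsq)
          have hrow'inj : Function.Injective (Function.update row a p) := by
            intro i j hij
            by_cases hia : i = a <;> by_cases hja : j = a
            · rw [hia, hja]
            · rw [hia, Function.update_self, Function.update_of_ne hja] at hij
              exact absurd hij.symm (hpnr j)
            · rw [hja, Function.update_self, Function.update_of_ne hia] at hij
              exact absurd hij (hpnr i)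
            · rw [Function.update_of_ne hia, Function.update_of_ne hja] at hij
              exact hrow hij
          have hrow'0 : ∀ i, Function.update row a p i ≠ 0 := by
            intro i
            by_cases hia : i = a
            · rw [hia, Function.update_self]; exact hp0
            · rw [Function.update_of_ne hia]; exact hrne i hia
          have hcolfacts : ∀ (w : Fin (N+1)), w ≠ 0 → (∀ j, col j ≠ w) →
              Function.Injective (Function.update col b w) ∧
              (∀ j, Function.update col b w j ≠ 0) := by
            intro w hw0 hwnc
            constructor
            · intro i j hij
              by_cases hib : i = b <;> by_cases hjb : j = b
              · rw [hib, hjb]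
              · rw [hib, Function.update_self, Function.update_of_ne hjb] at hij
                exact absurd hij.symm (hwnc j)
              · rw [hjb, Function.update_self, Function.update_of_ne hib] at hij
                exact absurd hij (hwnc i)
              · rw [Function.update_of_ne hib, Function.update_of_ne hjb] at hij
                exact hcol hij
            · intro j
              by_cases hjb : j = b
              · rw [hjb, Function.update_self]; exact hw0
              · rw [Function.update_of_ne hjb]; exact hcne j hjb
          -- stage 1
          obtain ⟨σ, τ, hne, hmσ, hmτ⟩ := HA (Function.update row a p)
            (Function.update col b q) hrow'inj (hcolfacts q hq0 hqnc).1 hrow'0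
            (hcolfacts q hq0 hqnc).2
          have e1 := case4claim M hsym hpos h0r row col hrow hcol a ha b hb σs hmin
            hPuniq hkb p hp0 hpc q hq0 hrsq σ hmσ
          have e2 := case4claim M hsym hpos h0r row col hrow hcol a ha b hb σs hmin
            hPuniq hkb p hp0 hpc q hq0 hrsq τ hmτ
          have hprs : M p (row (σs.symm b)) = 0 := by
            rcases e1 with e1 | ⟨_, h⟩
            · rcases e2 with e2 | ⟨_, h⟩
              · exact (hne (add_right_cancel (e1.trans e2.symm))).elim
              · exact h
            · exact h
          -- stage 2
          have hrsp : M (row (σs.symm b)) p = 0 := by rw [hsym]; exact hprs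
          have hpnc : ∀ j, col j ≠ p := by
            intro j h
            have hjb : j ≠ b := by
              intro h'
              rw [h', hb] at h
              exact hp0 h.symm
            exact hβ j hjb (by rw [h]; exact hrsp)
          obtain ⟨σ2, τ2, hne2, hmσ2, hmτ2⟩ := HA (Function.update row a p)
            (Function.update col b p) hrow'inj (hcolfacts p hp0 hpnc).1 hrow'0
            (hcolfacts p hp0 hpnc).2
          have f1 := case4claim M hsym hpos h0r row col hrow hcol a ha b hb σs hmin
            hPuniq hkb p hp0 hpc p hp0 hrsp σ2 hmσ2
          have f2 := case4claim M hsym hpos h0r row col hrow hcol a ha b hb σs hmin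
            hPuniq hkb p hp0 hpc p hp0 hrsp τ2 hmτ2
          apply hne2
          have hswap : ({Sym2.mk p (col (σs a)), Sym2.mk (row (σs.symm b)) p} :
                Multiset (Sym2 (Fin (N+1))))
              + {Sym2.mk ((0:Fin (N+1))) (row (σs.symm b)), Sym2.mk (col (σs a)) ((0:Fin (N+1)))}
              = {Sym2.mk p (row (σs.symm b)), Sym2.mk (col (σs a)) p}
              + {Sym2.mk ((0:Fin (N+1))) (col (σs a)), Sym2.mk (row (σs.symm b)) ((0:Fin (N+1)))} := by
            rw [show Sym2.mk (row (σs.symm b)) p = Sym2.mk p (row (σs.symm b)) from Sym2.eq_swap,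
              show Sym2.mk (col (σs a)) ((0:Fin (N+1))) = Sym2.mk ((0:Fin (N+1))) (col (σs a)) from Sym2.eq_swap,
              show Sym2.mk (col (σs a)) p = Sym2.mk p (col (σs a)) from Sym2.eq_swap,
              show Sym2.mk (row (σs.symm b)) ((0:Fin (N+1))) = Sym2.mk ((0:Fin (N+1))) (row (σs.symm b)) from Sym2.eq_swap,
              Multiset.pair_comm (Sym2.mk p (row (σs.symm b))) (Sym2.mk p (col (σs a))),
              Multiset.pair_comm (Sym2.mk ((0:Fin (N+1))) (col (σs a))) (Sym2.mk ((0:Fin (N+1))) (row (σs.symm b)))]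
          rcases f1 with f1 | ⟨f1, _⟩ <;> rcases f2 with f2 | ⟨f2, _⟩
          · exact add_right_cancel (f1.trans f2.symm)
          · exact cross_cancel f1 f2 hswap
          · exact (cross_cancel f2 f1 hswap).symm
          · exact add_right_cancel (f1.trans f2.symm)
end Case4Main

section Combine

private lemma mainTrop {N r : ℕ} (M : Matrix (Fin (N+1)) (Fin (N+1)) ℝ)
    (hsym : ∀ i j, M i j = M j i)
    (hpos : ∀ i j, 0 ≤ M i j)
    (h0r : ∀ j, M 0 j = 0)
    (hzero : ∀ c : Fin (N+1), c ≠ 0 → ∃ p, p ≠ 0 ∧ M p c = 0)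
    (hr : 3 ≤ r)
    (HA : ∀ row col : Fin r → Fin (N+1), Function.Injective row → Function.Injective col →
      (∀ i, row i ≠ 0) → (∀ j, col j ≠ 0) → SymTropSing M row col)
    (row col : Fin r → Fin (N+1)) (hrow : Function.Injective row)
    (hcol : Function.Injective col) :
    SymTropSing M row col := by
  have h0c : ∀ i, M i 0 = 0 := fun i => (hsym i 0).trans (h0r i)
  by_cases hr0 : ∃ a, row a = 0
  · obtain ⟨a, ha⟩ := hr0
    by_cases hc0 : ∃ b, col b = 0
    · obtain ⟨b, hb⟩ := hc0
      exact case4 M hsym hpos h0r hzero hr HA row col hrow hcol a ha b hb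
    · push_neg at hc0
      exact case2 M hpos h0r hzero HA row col hrow hcol a ha hc0
  · push_neg at hr0
    by_cases hc0 : ∃ b, col b = 0
    · obtain ⟨b, hb⟩ := hc0
      have := case2 M hpos h0r hzero
        (fun R C hR hC hR0 hC0 => HA R C hR hC hR0 hC0)
        col row hcol hrow b hb hr0
      exact symTropSing_transpose M row col hsym this
    · push_neg at hc0
      exact HA row col hrow hcol hr0 hc0

end Combine

section Transfer

variable {n r : ℕ} {A : Matrix (Fin n) (Fin n) ℝ} {M : Matrix (Fin (n+1)) (Fin (n+1)) ℝ}

private lemma tropVal_succ (hM : ∀ i j, M i.succ j.succ = A i j)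
    (row col : Fin r → Fin n) (γ : Equiv.Perm (Fin r)) :
    tropVal M (Fin.succ ∘ row) (Fin.succ ∘ col) γ = tropVal A row col γ := by
  apply Finset.sum_congr rfl
  intro s _
  exact hM _ _

private lemma tropPairs_succ (row col : Fin r → Fin n) (γ : Equiv.Perm (Fin r)) :
    tropPairs (Fin.succ ∘ row) (Fin.succ ∘ col) γ
      = Multiset.map (Sym2.map Fin.succ) (tropPairs row col γ) := by
  unfold tropPairs
  rw [Multiset.map_map]
  apply Multiset.map_congr rfl
  intro s _
  simp [Sym2.map_pair_eq]

private lemma symTropSing_succ_iff (hM : ∀ i j, M i.succ j.succ = A i j)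
    (row col : Fin r → Fin n) :
    SymTropSing M (Fin.succ ∘ row) (Fin.succ ∘ col) ↔ SymTropSing A row col := by
  have hval : ∀ γ, tropVal M (Fin.succ ∘ row) (Fin.succ ∘ col) γ = tropVal A row col γ :=
    tropVal_succ hM row col
  have hmin : ∀ γ, Minimizing M (Fin.succ ∘ row) (Fin.succ ∘ col) γ ↔ Minimizing A row col γ := by
    intro γ
    constructor <;> intro h ρ
    · rw [← hval γ, ← hval ρ]; exact h ρ
    · rw [hval γ, hval ρ]; exact h ρ
  constructor
  · rintro ⟨σ, τ, hne, h1, h2⟩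
    refine ⟨σ, τ, ?_, (hmin σ).mp h1, (hmin τ).mp h2⟩
    intro h
    rw [tropPairs_succ, tropPairs_succ, h] at hne
    exact hne rfl
  · rintro ⟨σ, τ, hne, h1, h2⟩
    refine ⟨σ, τ, ?_, (hmin σ).mpr h1, (hmin τ).mpr h2⟩
    rw [tropPairs_succ, tropPairs_succ]
    intro h
    exact hne (Multiset.map_injective (Sym2.map.injective (Fin.succ_injective n)) h)

end Transfer

section TropPart

private lemma trop_part {n : ℕ} (A : Matrix (Fin n) (Fin n) ℝ) (hA : A.IsSymm)
    (hrow : ∀ i : Fin n, (∀ j, 0 ≤ A i j) ∧ ∃ j, A i j = 0)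
    (hcol : ∀ j : Fin n, (∀ i, 0 ≤ A i j) ∧ ∃ i, A i j = 0)
    (Aplus : Matrix (Fin (n + 1)) (Fin (n + 1)) ℝ)
    (hM : ∀ (i j : Fin n), Aplus i.succ j.succ = A i j)
    (h0r : ∀ j, Aplus 0 j = 0)
    (hsym : ∀ i j, Aplus i j = Aplus j i)
    (hpos : ∀ i j, 0 ≤ Aplus i j)
    (h2 : symTropicalRank A = 2) : symTropicalRank Aplus = 2 := by
  classical
  unfold symTropicalRank at h2 ⊢
  have hzero : ∀ c : Fin (n+1), c ≠ 0 → ∃ p, p ≠ 0 ∧ Aplus p c = 0 := by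
    intro c hc
    obtain ⟨i, hi⟩ := (hcol (c.pred hc)).2
    refine ⟨i.succ, Fin.succ_ne_zero i, ?_⟩
    have := hM i (c.pred hc)
    rw [Fin.succ_pred] at this
    rw [this]
    exact hi
  have hzeroS : ∀ {m : ℕ} (B : Matrix (Fin m) (Fin m) ℝ),
      (0 : ℕ) ∈ {r | ∃ row col : Fin r → Fin m, StrictMono row ∧ StrictMono col ∧
        ¬ SymTropSing B row col} := by
    intro m B
    refine ⟨Fin.elim0, Fin.elim0, fun a => a.elim0, fun a => a.elim0, ?_⟩
    rintro ⟨σ, τ, hne, -, -⟩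
    have : σ = τ := Equiv.ext (fun x => x.elim0)
    rw [this] at hne
    exact hne rfl
  have hbddS : ∀ {m : ℕ} (B : Matrix (Fin m) (Fin m) ℝ),
      BddAbove {r | ∃ row col : Fin r → Fin m, StrictMono row ∧ StrictMono col ∧
        ¬ SymTropSing B row col} := by
    intro m B
    refine ⟨m, ?_⟩
    rintro r ⟨row, col, hr, hc, -⟩
    simpa using Fintype.card_le_of_injective row hr.injective
  have hmem2 := Nat.sSup_mem ⟨0, hzeroS A⟩ (hbddS A)
  rw [h2] at hmem2
  have hub : ∀ r' ∈ {r | ∃ row col : Fin r → Fin n, StrictMono row ∧ StrictMono col ∧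
      ¬ SymTropSing A row col}, r' ≤ 2 := fun r' hr' => h2 ▸ le_csSup (hbddS A) hr'
  -- HA for A, injective version
  have HAinj : ∀ r, 3 ≤ r → ∀ row col : Fin r → Fin n, Function.Injective row →
      Function.Injective col → SymTropSing A row col := by
    intro r hr row col hrowi hcoli
    by_contra hns
    obtain ⟨g, π, hg, hfg⟩ := exists_strictMono_comp row hrowi
    obtain ⟨g', ρ, hg', hfg'⟩ := exists_strictMono_comp col hcoli
    have hnotg : ¬ SymTropSing A g g' := by
      intro hs
      apply hns
      have := symTropSing_comp A g g' π ρ hs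
      rwa [← hfg, ← hfg'] at this
    have : r ≤ 2 := hub r ⟨g, g', hg, hg', hnotg⟩
    omega
  -- HA for Aplus away from index 0
  have HAplus : ∀ r, 3 ≤ r → ∀ row col : Fin r → Fin (n+1), Function.Injective row →
      Function.Injective col → (∀ i, row i ≠ 0) → (∀ j, col j ≠ 0) →
      SymTropSing Aplus row col := by
    intro r hr row col hrowi hcoli hrow0 hcol0
    set row₀ : Fin r → Fin n := fun i => (row i).pred (hrow0 i) with hrow₀
    set col₀ : Fin r → Fin n := fun j => (col j).pred (hcol0 j) with hcol₀
    have hre : row = Fin.succ ∘ row₀ := by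
      funext i
      simp [hrow₀, Fin.succ_pred]
    have hce : col = Fin.succ ∘ col₀ := by
      funext j
      simp [hcol₀, Fin.succ_pred]
    have hrow₀i : Function.Injective row₀ := by
      intro i j h
      apply hrowi
      rw [hre]
      simp [Function.comp, h]
    have hcol₀i : Function.Injective col₀ := by
      intro i j h
      apply hcoli
      rw [hce]
      simp [Function.comp, h]
    rw [hre, hce]
    exact (symTropSing_succ_iff hM row₀ col₀).mpr (HAinj r hr row₀ col₀ hrow₀i hcol₀i)
  -- conclude
  apply le_antisymm
  · apply csSup_le ⟨0, hzeroS Aplus⟩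
    rintro r ⟨row, col, hsr, hsc, hno⟩
    by_contra h3
    push_neg at h3
    exact hno (mainTrop Aplus hsym hpos h0r hzero (by omega) (HAplus r (by omega))
      row col hsr.injective hsc.injective)
  · apply le_csSup (hbddS Aplus)
    obtain ⟨row, col, hsr, hsc, hno⟩ := hmem2
    refine ⟨Fin.succ ∘ row, Fin.succ ∘ col, ?_, ?_, ?_⟩
    · exact fun a b h => Fin.succ_lt_succ_iff.mpr (hsr h)
    · exact fun a b h => Fin.succ_lt_succ_iff.mpr (hsc h)
    · intro hs
      exact hno ((symTropSing_succ_iff hM row col).mp hs)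

end TropPart

section KapAux

private lemma coeff_finsum {ι : Type*} (s : Finset ι) (f : ι → K) (g : ℝ) :
    (∑ i ∈ s, f i).coeff g = ∑ i ∈ s, (f i).coeff g := by
  classical
  induction s using Finset.cons_induction with
  | empty => simp
  | cons a s ha ih => rw [Finset.sum_cons, Finset.sum_cons, HahnSeries.coeff_add, ih]

private lemma coeff_C_mul (z : ℂ) (x : K) (g : ℝ) :
    (HahnSeries.C z * x).coeff g = z * x.coeff g := by
  rw [HahnSeries.C_apply]
  have := HahnSeries.coeff_single_mul_add (r := z) (x := x) (a := g) (b := 0)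
  simpa using this

private lemma order_eq_zero_of {x : K} (h0 : x.coeff 0 ≠ 0)
    (hneg : ∀ g : ℝ, g < 0 → x.coeff g = 0) : x ≠ 0 ∧ x.order = 0 := by
  have hx : x ≠ 0 := fun h => h0 (by rw [h]; simp)
  refine ⟨hx, le_antisymm (HahnSeries.order_le_of_coeff_ne_zero h0) ?_⟩
  by_contra h
  push_neg at h
  exact (HahnSeries.coeff_order_eq_zero.not.mpr hx) (hneg _ h)

private lemma rank_submatrix_le' {m' m : ℕ} (C : Matrix (Fin m) (Fin m) K)
    (f g : Fin m' → Fin m) : (C.submatrix f g).rank ≤ C.rank := by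
  classical
  have h1 : C * ((1 : Matrix (Fin m) (Fin m) K).submatrix (Equiv.refl (Fin m)) g)
      = C.submatrix id g := by
    rw [Matrix.mul_submatrix_one]
    rfl
  have h2 : ((1 : Matrix (Fin m) (Fin m) K).submatrix f ⇑(Equiv.refl (Fin m)))
      * (C.submatrix id g) = C.submatrix f g := by
    rw [Matrix.one_submatrix_mul]
    rw [Matrix.submatrix_submatrix]
    rfl
  calc (C.submatrix f g).rank
      = (((1 : Matrix (Fin m) (Fin m) K).submatrix f ⇑(Equiv.refl (Fin m)))
          * (C * ((1 : Matrix (Fin m) (Fin m) K).submatrix (Equiv.refl (Fin m)) g))).rank := by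
        rw [h1, h2]
    _ ≤ (C * ((1 : Matrix (Fin m) (Fin m) K).submatrix (Equiv.refl (Fin m)) g)).rank :=
        Matrix.rank_mul_le_right _ _
    _ ≤ C.rank := Matrix.rank_mul_le_left _ _

private lemma sum_mul_ite {n : ℕ} (c : Fin n → ℂ) (m : Fin n) :
    ∑ j, c j * (if j = m then (1:ℂ) else 0) = c m := by
  simp [mul_ite, Finset.sum_ite_eq']

end KapAux

section GoodZ

private lemma exists_good_z {n : ℕ} (A : Matrix (Fin n) (Fin n) ℝ)
    (hrow : ∀ i : Fin n, (∀ j, 0 ≤ A i j) ∧ ∃ j, A i j = 0)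
    (hcol : ∀ j : Fin n, (∀ i, 0 ≤ A i j) ∧ ∃ i, A i j = 0)
    (hn : 2 ≤ n)
    (bC : Fin n → Fin n → ℂ)
    (hbCne : ∀ k l, A k l = 0 → bC k l ≠ 0)
    (hbCsymm : ∀ k l, bC k l = bC l k) :
    ∃ z : Fin n → ℂ, (∑ k, ∑ l, bC k l * z k * z l) ≠ 0 ∧ ∀ i, (∑ k, bC k i * z k) ≠ 0 := by
  classical
  set L : Fin n → MvPolynomial (Fin n) ℂ :=
    fun i => ∑ k, MvPolynomial.C (bC k i) * MvPolynomial.X k with hL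
  set Q : MvPolynomial (Fin n) ℂ :=
    ∑ k, ∑ l, MvPolynomial.C (bC k l) * MvPolynomial.X k * MvPolynomial.X l with hQ
  have hevalL : ∀ (z : Fin n → ℂ) i, MvPolynomial.eval z (L i) = ∑ k, bC k i * z k := by
    intro z i
    rw [hL]
    simp
  have hevalQ : ∀ (z : Fin n → ℂ),
      MvPolynomial.eval z Q = ∑ k, ∑ l, bC k l * z k * z l := by
    intro z
    rw [hQ]
    simp
  have hLne : ∀ i, L i ≠ 0 := by
    intro i hLi
    obtain ⟨k, hk⟩ := (hcol i).2
    apply hbCne k i hk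
    have h1 := congrArg (MvPolynomial.eval (fun m => if m = k then (1:ℂ) else 0)) hLi
    rw [hevalL, map_zero] at h1
    rw [← sum_mul_ite (fun m => bC m i) k]
    exact h1
  have hQne : Q ≠ 0 := by
    intro hQ0
    have hz : ∀ x : Fin n → ℂ, ∑ k, ∑ l, bC k l * x k * x l = 0 := by
      intro x
      rw [← hevalQ, hQ0, map_zero]
    have hkey : ∀ x : Fin n → ℂ, ∀ m : Fin n,
        ∑ k, ∑ l, bC k l * x k * (if l = m then (1:ℂ) else 0) = ∑ k, bC k m * x k := by
      intro x m
      apply Finset.sum_congr rfl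
      intro k _
      rw [sum_mul_ite (fun l => bC k l * x k) m]
    have hdiag : ∀ k, bC k k = 0 := by
      intro k
      have h := hz (fun m => if m = k then (1:ℂ) else 0)
      rw [hkey _ k] at h
      rw [← sum_mul_ite (fun j => bC j k) k]
      exact h
    have hall : ∀ k l, bC k l = 0 := by
      intro k l
      by_cases hkl : k = l
      · rw [hkl]; exact hdiag l
      · set x : Fin n → ℂ :=
          fun m => (if m = k then (1:ℂ) else 0) + (if m = l then 1 else 0) with hx
        have hsplit : ∀ c : Fin n → ℂ, ∑ j, c j * x j = c k + c l := by
          intro c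
          have : ∀ j, c j * x j
              = c j * (if j = k then (1:ℂ) else 0) + c j * (if j = l then (1:ℂ) else 0) := by
            intro j
            rw [hx, mul_add]
          rw [Finset.sum_congr rfl (fun j _ => this j), Finset.sum_add_distrib,
            sum_mul_ite c k, sum_mul_ite c l]
        have h := hz x
        have e1 : ∀ k', ∑ l', bC k' l' * x k' * x l' = bC k' k * x k' + bC k' l * x k' := by
          intro k'
          exact hsplit (fun l' => bC k' l' * x k')
        rw [Finset.sum_congr rfl (fun k' _ => e1 k'), Finset.sum_add_distrib,
          hsplit (fun k' => bC k' k), hsplit (fun k' => bC k' l)] at h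
        rw [hdiag k, hdiag l, hbCsymm l k] at h
        rw [zero_add, add_zero] at h
        exact add_self_eq_zero.mp h
    obtain ⟨l0, hl0⟩ := (hrow ⟨0, by omega⟩).2
    exact hbCne _ _ hl0 (hall _ _)
  have hFne : Q * ∏ i, L i ≠ 0 :=
    mul_ne_zero hQne (Finset.prod_ne_zero_iff.mpr fun i _ => hLne i)
  have hex : ∃ z : Fin n → ℂ, MvPolynomial.eval z (Q * ∏ i, L i) ≠ 0 := by
    by_contra h
    push_neg at h
    exact hFne (MvPolynomial.funext (q := 0) (fun x => by rw [h x, map_zero]))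
  obtain ⟨z, hzF⟩ := hex
  rw [_root_.map_mul, map_prod] at hzF
  refine ⟨z, ?_, ?_⟩
  · rw [← hevalQ z]
    intro h
    rw [h, zero_mul] at hzF
    exact hzF rfl
  · intro i
    rw [← hevalL z i]
    intro h
    apply hzF
    rw [Finset.prod_eq_zero (Finset.mem_univ i) h, mul_zero]

end GoodZ

section KapPart

private lemma kap_part {n : ℕ} (A : Matrix (Fin n) (Fin n) ℝ)
    (hrow : ∀ i : Fin n, (∀ j, 0 ≤ A i j) ∧ ∃ j, A i j = 0)
    (hcol : ∀ j : Fin n, (∀ i, 0 ≤ A i j) ∧ ∃ i, A i j = 0)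
    (Aplus : Matrix (Fin (n + 1)) (Fin (n + 1)) ℝ)
    (hM : ∀ (i j : Fin n), Aplus i.succ j.succ = A i j)
    (h0r : ∀ j, Aplus 0 j = 0)
    (h0c : ∀ i, Aplus i 0 = 0)
    (h2 : symKapranovRank A = 2) : symKapranovRank Aplus = 2 := by
  classical
  unfold symKapranovRank at h2 ⊢
  have hTne : {r | ∃ B : Matrix (Fin n) (Fin n) K, IsLift A B ∧ B.IsSymm ∧ B.rank = r}.Nonempty := by
    by_contra h
    rw [Set.not_nonempty_iff_eq_empty] at h
    rw [h, Nat.sInf_empty] at h2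
    omega
  have hmem := Nat.sInf_mem hTne
  rw [h2] at hmem
  obtain ⟨B, hBlift, hBsymm, hBrank⟩ := hmem
  have hTlb : ∀ t ∈ {r | ∃ B : Matrix (Fin n) (Fin n) K, IsLift A B ∧ B.IsSymm ∧ B.rank = r},
      2 ≤ t := fun t ht => h2 ▸ Nat.sInf_le ht
  have hn2 : 2 ≤ n := by
    have h := Matrix.rank_le_card_width B
    rw [hBrank] at h
    simpa using h
  set bC : Fin n → Fin n → ℂ := fun k l => (B k l).coeff 0 with hbC
  have hord : ∀ k l, (B k l).order = A k l := fun k l => (hBlift k l).2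
  have hBne : ∀ k l, B k l ≠ 0 := fun k l => (hBlift k l).1
  have hbCne : ∀ k l, A k l = 0 → bC k l ≠ 0 := by
    intro k l h
    have hco := HahnSeries.coeff_order_eq_zero.not.mpr (hBne k l)
    rw [hord, h] at hco
    exact hco
  have hBcoeff0 : ∀ k l (g : ℝ), g < A k l → (B k l).coeff g = 0 := by
    intro k l g hg
    exact HahnSeries.coeff_eq_zero_of_lt_order (by rw [hord]; exact hg)
  have hBsymm' : ∀ k l, B k l = B l k := fun k l => hBsymm.apply l k
  have hbCsymm : ∀ k l, bC k l = bC l k := by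
    intro k l
    show (B k l).coeff 0 = (B l k).coeff 0
    rw [hBsymm' k l]
  obtain ⟨z, hQz, hLz⟩ := exists_good_z A hrow hcol hn2 bC hbCne hbCsymm
  -- the bordered vector and corner entry
  set w : Fin n → K := fun i => ∑ k, HahnSeries.C (z k) * B k i with hw
  set aa : K := ∑ l, w l * HahnSeries.C (z l) with haa
  have hwcoeff : ∀ i (g : ℝ), (w i).coeff g = ∑ k, z k * (B k i).coeff g := by
    intro i g
    show (∑ k, HahnSeries.C (z k) * B k i).coeff g = _
    rw [coeff_finsum]
    exact Finset.sum_congr rfl (fun k _ => coeff_C_mul (z k) (B k i) g)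
  have hwneg : ∀ i (g : ℝ), g < 0 → (w i).coeff g = 0 := by
    intro i g hg
    rw [hwcoeff]
    apply Finset.sum_eq_zero
    intro k _
    rw [hBcoeff0 k i g (lt_of_lt_of_le hg ((hrow k).1 i)), mul_zero]
  have hw0 : ∀ i, (w i).coeff 0 = ∑ k, bC k i * z k := by
    intro i
    rw [hwcoeff]
    exact Finset.sum_congr rfl (fun k _ => mul_comm _ _)
  have hwfacts : ∀ i, w i ≠ 0 ∧ (w i).order = 0 := fun i =>
    order_eq_zero_of (by rw [hw0]; exact hLz i) (hwneg i)
  have haacoeff : ∀ g : ℝ, aa.coeff g = ∑ l, (w l).coeff g * z l := by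
    intro g
    show (∑ l, w l * HahnSeries.C (z l)).coeff g = _
    rw [coeff_finsum]
    apply Finset.sum_congr rfl
    intro l _
    rw [mul_comm (w l) (HahnSeries.C (z l)), coeff_C_mul, mul_comm]
  have haaneg : ∀ g : ℝ, g < 0 → aa.coeff g = 0 := by
    intro g hg
    rw [haacoeff]
    apply Finset.sum_eq_zero
    intro l _
    rw [hwneg l g hg, zero_mul]
  have haa0 : aa.coeff 0 = ∑ k, ∑ l, bC k l * z k * z l := by
    rw [haacoeff]
    rw [Finset.sum_comm]
    apply Finset.sum_congr rfl
    intro l _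
    rw [hw0 l, Finset.sum_mul]
  have haafacts : aa ≠ 0 ∧ aa.order = 0 :=
    order_eq_zero_of (by rw [haa0]; exact hQz) haaneg
  -- bordered matrix
  set P : Matrix (Fin (n+1)) (Fin n) K :=
    Matrix.of (Fin.cons (fun k => HahnSeries.C (z k)) (fun i k => if i = k then 1 else 0)) with hP
  set Cm : Matrix (Fin (n+1)) (Fin (n+1)) K := P * B * Pᵀ with hCm
  have hPapply0 : ∀ k, P 0 k = HahnSeries.C (z k) := by
    intro k
    rw [hP]
    rfl
  have hPapplyS : ∀ (i : Fin n) k, P i.succ k = if i = k then 1 else 0 := by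
    intro i k
    rw [hP]
    show ((Fin.cons (fun k => HahnSeries.C (z k))
        (fun (i : Fin n) (k : Fin n) => if i = k then (1:K) else 0) :
        Fin (n+1) → Fin n → K) i.succ) k = if i = k then 1 else 0
    rw [Fin.cons_succ]
  have hPB0 : ∀ l, (P * B) 0 l = w l := by
    intro l
    rw [Matrix.mul_apply]
    exact Finset.sum_congr rfl (fun k _ => by rw [hPapply0])
  have hPBS : ∀ (i : Fin n) l, (P * B) i.succ l = B i l := by
    intro i l
    rw [Matrix.mul_apply]
    have : ∀ k, P i.succ k * B k l = (if k = i then B k l else 0) := by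
      intro k
      rw [hPapplyS]
      by_cases h : i = k
      · rw [if_pos h, if_pos h.symm, one_mul]
      · rw [if_neg h, if_neg (Ne.symm h), zero_mul]
    rw [Finset.sum_congr rfl (fun k _ => this k), Finset.sum_ite_eq' Finset.univ i
      (fun k => B k l), if_pos (Finset.mem_univ i)]
  have hCm00 : Cm 0 0 = aa := by
    rw [hCm, Matrix.mul_apply, haa]
    apply Finset.sum_congr rfl
    intro l _
    rw [hPB0 l, Matrix.transpose_apply, hPapply0]
  have hCm0S : ∀ j : Fin n, Cm 0 j.succ = w j := by
    intro j
    rw [hCm, Matrix.mul_apply]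
    have : ∀ l, (P * B) 0 l * Pᵀ l j.succ = (if l = j then w l else 0) := by
      intro l
      rw [hPB0, Matrix.transpose_apply, hPapplyS]
      by_cases h : j = l
      · rw [if_pos h, if_pos h.symm, mul_one]
      · rw [if_neg h, if_neg (Ne.symm h), mul_zero]
    rw [Finset.sum_congr rfl (fun l _ => this l), Finset.sum_ite_eq' Finset.univ j w,
      if_pos (Finset.mem_univ j)]
  have hCmS0 : ∀ i : Fin n, Cm i.succ 0 = w i := by
    intro i
    rw [hCm, Matrix.mul_apply]
    have hterm : ∀ l, (P * B) i.succ l * Pᵀ l 0 = HahnSeries.C (z l) * B l i := by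
      intro l
      rw [hPBS, Matrix.transpose_apply, hPapply0, hBsymm' i l, mul_comm]
    calc ∑ l, (P * B) i.succ l * Pᵀ l 0 = ∑ l, HahnSeries.C (z l) * B l i :=
          Finset.sum_congr rfl (fun l _ => hterm l)
      _ = w i := rfl
  have hCmSS : ∀ i j : Fin n, Cm i.succ j.succ = B i j := by
    intro i j
    rw [hCm, Matrix.mul_apply]
    have : ∀ l, (P * B) i.succ l * Pᵀ l j.succ = (if l = j then B i l else 0) := by
      intro l
      rw [hPBS, Matrix.transpose_apply, hPapplyS]
      by_cases h : j = l
      · rw [if_pos h, if_pos h.symm, mul_one]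
      · rw [if_neg h, if_neg (Ne.symm h), mul_zero]
    rw [Finset.sum_congr rfl (fun l _ => this l), Finset.sum_ite_eq' Finset.univ j
      (fun l => B i l), if_pos (Finset.mem_univ j)]
  -- properties of Cm
  have hCmlift : IsLift Aplus Cm := by
    intro i j
    induction i using Fin.cases with
    | zero =>
      induction j using Fin.cases with
      | zero =>
        rw [hCm00, h0r 0]
        exact haafacts
      | succ j =>
        rw [hCm0S j, h0r j.succ]
        exact hwfacts j
    | succ i =>
      induction j using Fin.cases with
      | zero =>
        rw [hCmS0 i, h0c i.succ]
        exact hwfacts i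
      | succ j =>
        rw [hCmSS i j, hM i j]
        exact hBlift i j
  have hCmsymm : Cm.IsSymm := by
    unfold Matrix.IsSymm
    apply Matrix.ext
    intro i j
    rw [Matrix.transpose_apply]
    induction i using Fin.cases with
    | zero =>
      induction j using Fin.cases with
      | zero => rfl
      | succ j => rw [hCm0S j, hCmS0 j]
    | succ i =>
      induction j using Fin.cases with
      | zero => rw [hCm0S i, hCmS0 i]
      | succ j => rw [hCmSS i j, hCmSS j i, hBsymm' j i]
  have hsub : Cm.submatrix Fin.succ Fin.succ = B :=
    Matrix.ext fun i j => hCmSS i j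
  have hrankge : 2 ≤ Cm.rank := by
    rw [← hBrank, ← hsub]
    exact rank_submatrix_le' Cm Fin.succ Fin.succ
  have hrankle : Cm.rank ≤ 2 := by
    rw [hCm, ← hBrank]
    calc (P * B * Pᵀ).rank ≤ (P * B).rank := Matrix.rank_mul_le_left _ _
      _ ≤ B.rank := Matrix.rank_mul_le_right _ _
  have hrank2 : Cm.rank = 2 := le_antisymm hrankle hrankge
  apply le_antisymm
  · exact Nat.sInf_le ⟨Cm, hCmlift, hCmsymm, hrank2⟩
  · refine le_csInf ⟨2, ⟨Cm, hCmlift, hCmsymm, hrank2⟩⟩ ?_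
    rintro t ⟨Cc, hCl, hCs, hCr⟩
    have hsubmem : (Cc.submatrix Fin.succ Fin.succ).rank ∈
        {r | ∃ B : Matrix (Fin n) (Fin n) K, IsLift A B ∧ B.IsSymm ∧ B.rank = r} := by
      refine ⟨Cc.submatrix Fin.succ Fin.succ, ?_, ?_, rfl⟩
      · intro i j
        have := hCl i.succ j.succ
        rw [hM i j] at this
        exact this
      · unfold Matrix.IsSymm
        apply Matrix.ext
        intro i j
        rw [Matrix.transpose_apply]
        show Cc j.succ i.succ = Cc i.succ j.succ
        exact hCs.apply i.succ j.succ
    have h2le := hTlb _ hsubmem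
    have hle := rank_submatrix_le' Cc Fin.succ Fin.succ
    omega

end KapPart
/-- Lemma 5 of the paper: If `A` is symmetric with every row and column having
`0` as minimal entry, and `A⁺` is obtained by adjoining a zero first row and column, then
(1) symmetric tropical rank two is preserved, and (2) symmetric Kapranov rank two is preserved. -/
theorem stmt14 (n : ℕ) (A : Matrix (Fin n) (Fin n) ℝ) (hA : A.IsSymm)
    (hrow : ∀ i : Fin n, (∀ j, 0 ≤ A i j) ∧ ∃ j, A i j = 0)
    (hcol : ∀ j : Fin n, (∀ i, 0 ≤ A i j) ∧ ∃ i, A i j = 0)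
    (Aplus : Matrix (Fin (n + 1)) (Fin (n + 1)) ℝ)
    (hAplus : ∀ i j : Fin (n + 1),
      Aplus i j =
        if h : (i : ℕ) = 0 ∨ (j : ℕ) = 0 then 0
        else A ⟨(i : ℕ) - 1, by have := i.isLt; omega⟩ ⟨(j : ℕ) - 1, by have := j.isLt; omega⟩) :
    (symTropicalRank A = 2 → symTropicalRank Aplus = 2) ∧
    (symKapranovRank A = 2 → symKapranovRank Aplus = 2) := by
  have hM : ∀ (i j : Fin n), Aplus i.succ j.succ = A i j := by
    intro i j
    rw [hAplus]
    rw [dif_neg]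
    · congr 1 <;> exact Fin.ext (by simp)
    · intro h
      rcases h with h | h <;> simp [Fin.val_succ] at h
  have h0r : ∀ j, Aplus 0 j = 0 := by
    intro j
    rw [hAplus]
    exact dif_pos (Or.inl rfl)
  have h0c : ∀ i, Aplus i 0 = 0 := by
    intro i
    rw [hAplus]
    exact dif_pos (Or.inr rfl)
  have hsym : ∀ i j, Aplus i j = Aplus j i := by
    intro i j
    rw [hAplus, hAplus]
    by_cases h : (i:ℕ) = 0 ∨ (j:ℕ) = 0
    · rw [dif_pos h, dif_pos (Or.symm h)]
    · rw [dif_neg h, dif_neg (fun hh => h (Or.symm hh))]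
      exact (hA.apply _ _).symm
  have hpos : ∀ i j, 0 ≤ Aplus i j := by
    intro i j
    rw [hAplus]
    split_ifs with h
    · exact le_refl 0
    · exact (hrow _).1 _
  constructor
  · exact trop_part A hA hrow hcol Aplus hM h0r hsym hpos
  · exact kap_part A hrow hcol Aplus hM h0r h0c

end
end

section
/- Let A be an n×n real symmetric matrix with symmetric tropical rank r, and let A'' be the (n+1)×(n+1) matrix obtained by duplicating the last row and the last column of A, i.e., A''_{s,t} = A_{min(s,n),min(t,n)}. Then A'' is symmetric and has symmetric tropical rank r. -/
/-!
Common definitions for tropical geometry of symmetric matrices, following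
Develin–Santos–Sturmfels and the paper under formalization.
-/

open Matrix

noncomputable section

lemma tropPairs_map {n m r : ℕ} (row col : Fin r → Fin n) (g : Fin n → Fin m)
    (σ : Equiv.Perm (Fin r)) :
    tropPairs (g ∘ row) (g ∘ col) σ = (tropPairs row col σ).map (Sym2.map g) := by
  unfold tropPairs
  rw [Multiset.map_map]
  apply Multiset.map_congr rfl
  intro s _
  simp [Sym2.map_pair_eq]

lemma symTropSing_comp_s15 {n m r : ℕ} (A : Matrix (Fin n) (Fin n) ℝ)
    (B : Matrix (Fin m) (Fin m) ℝ) (row col : Fin r → Fin n) (g : Fin n → Fin m)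
    (hAB : ∀ s t : Fin r, B (g (row s)) (g (col t)) = A (row s) (col t))
    (h : SymTropSing B (g ∘ row) (g ∘ col)) : SymTropSing A row col := by
  obtain ⟨σ, τ, hne, hσ, hτ⟩ := h
  have hval : ∀ π : Equiv.Perm (Fin r), tropVal B (g ∘ row) (g ∘ col) π = tropVal A row col π :=
    fun π => Finset.sum_congr rfl fun s _ => hAB s (π s)
  refine ⟨σ, τ, ?_, fun π => by rw [← hval, ← hval]; exact hσ π,
    fun π => by rw [← hval, ← hval]; exact hτ π⟩
  intro h'
  exact hne (by rw [tropPairs_map, tropPairs_map, h'])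

lemma tropPairs_ne_mul_swap {n r : ℕ} (row col : Fin r → Fin n) (σ : Equiv.Perm (Fin r))
    (p q : Fin r) (hpq : p ≠ q) (hrow : row p ≠ row q) (hcol : col (σ p) ≠ col (σ q)) :
    tropPairs row col σ ≠ tropPairs row col (σ * Equiv.swap p q) := by
  intro h
  have hqmem : q ∈ (Finset.univ : Finset (Fin r)).val.erase p := by
    rw [← Finset.erase_val]
    exact Finset.mem_erase.mpr ⟨Ne.symm hpq, Finset.mem_univ q⟩
  have hu : (Finset.univ : Finset (Fin r)).val
      = p ::ₘ q ::ₘ ((Finset.univ.erase p).erase q).val := by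
    rw [Finset.erase_val, Finset.erase_val, Multiset.cons_erase hqmem,
      Multiset.cons_erase (Finset.mem_univ p : p ∈ (Finset.univ : Finset (Fin r)))]
  have hrest : (((Finset.univ.erase p).erase q).val).map
        (fun s => Sym2.mk (row s) (col (σ s)))
      = (((Finset.univ.erase p).erase q).val).map
        (fun s => Sym2.mk (row s) (col ((σ * Equiv.swap p q) s))) := by
    apply Multiset.map_congr rfl
    intro s hs
    have hs' : s ∈ (Finset.univ.erase p).erase q := hs
    have hs2 : s ≠ q ∧ s ≠ p := by
      have := Finset.mem_erase.mp hs'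
      exact ⟨this.1, (Finset.mem_erase.mp this.2).1⟩
    obtain ⟨hsq, hsp⟩ := hs2
    simp [Equiv.Perm.mul_apply, Equiv.swap_apply_of_ne_of_ne hsp hsq]
  unfold tropPairs at h
  rw [hu, Multiset.map_cons, Multiset.map_cons, Multiset.map_cons, Multiset.map_cons,
    ← hrest] at h
  have hτp : (σ * Equiv.swap p q) p = σ q := by simp
  have hτq : (σ * Equiv.swap p q) q = σ p := by simp
  rw [hτp, hτq] at h
  have hz1 : Sym2.mk (row p) (col (σ p)) ≠ Sym2.mk (row p) (col (σ q)) := by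
    intro hzz
    rcases Sym2.eq_iff.mp hzz with ⟨-, h2⟩ | ⟨h1, h2⟩
    · exact hcol h2
    · exact hcol (h2.trans h1)
  have hz2 : Sym2.mk (row p) (col (σ p)) ≠ Sym2.mk (row q) (col (σ p)) := by
    intro hzz
    rcases Sym2.eq_iff.mp hzz with ⟨h1, -⟩ | ⟨h1, h2⟩
    · exact hrow h1
    · exact hrow (h1.trans h2)
  have := congrArg (Multiset.count (Sym2.mk (row p) (col (σ p)))) h
  simp only [Multiset.count_cons, if_pos rfl, if_neg hz1, if_neg hz2] at this
  split_ifs at this <;> omega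

lemma exists_minimizing_s15 {n r : ℕ} (A : Matrix (Fin n) (Fin n) ℝ) (row col : Fin r → Fin n) :
    ∃ σ, Minimizing A row col σ := by
  obtain ⟨σ, -, hσ⟩ := Finset.exists_min_image Finset.univ (tropVal A row col)
    ⟨1, Finset.mem_univ 1⟩
  exact ⟨σ, fun τ => hσ τ (Finset.mem_univ τ)⟩

lemma symTropSing_of_dup_rows {n r : ℕ} (A : Matrix (Fin n) (Fin n) ℝ)
    (row col : Fin r → Fin n) (hcol : Function.Injective col)
    (p q : Fin r) (hpq : p ≠ q) (hrne : row p ≠ row q)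
    (heq : ∀ t : Fin r, A (row p) (col t) = A (row q) (col t)) :
    SymTropSing A row col := by
  obtain ⟨σ, hmin⟩ := exists_minimizing_s15 A row col
  have hval : tropVal A row col (σ * Equiv.swap p q) = tropVal A row col σ := by
    unfold tropVal
    calc ∑ s, A (row s) (col ((σ * Equiv.swap p q) s))
        = ∑ s, A (row (Equiv.swap p q s)) (col (σ (Equiv.swap p q s))) := by
          apply Finset.sum_congr rfl
          intro s _
          rcases eq_or_ne s p with rfl | hsp
          · rw [Equiv.Perm.mul_apply, Equiv.swap_apply_left]; exact heq _
          rcases eq_or_ne s q with rfl | hsq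
          · rw [Equiv.Perm.mul_apply, Equiv.swap_apply_right]; exact (heq _).symm
          · rw [Equiv.Perm.mul_apply, Equiv.swap_apply_of_ne_of_ne hsp hsq]
      _ = ∑ s, A (row s) (col (σ s)) :=
          Equiv.sum_comp (Equiv.swap p q) (fun s => A (row s) (col (σ s)))
  refine ⟨σ, σ * Equiv.swap p q,
    tropPairs_ne_mul_swap row col σ p q hpq hrne (hcol.ne (σ.injective.ne hpq)),
    hmin, fun π => hval ▸ hmin π⟩

lemma symTropSing_of_dup_cols {n r : ℕ} (A : Matrix (Fin n) (Fin n) ℝ)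
    (row col : Fin r → Fin n) (hrow : Function.Injective row)
    (p q : Fin r) (hpq : p ≠ q) (hcne : col p ≠ col q)
    (heq : ∀ s : Fin r, A (row s) (col p) = A (row s) (col q)) :
    SymTropSing A row col := by
  obtain ⟨σ, hmin⟩ := exists_minimizing_s15 A row col
  have hconj : Equiv.swap p q * σ = σ * Equiv.swap (σ⁻¹ p) (σ⁻¹ q) := by
    rw [Equiv.mul_swap_eq_swap_mul]
    simp
  have hval : tropVal A row col (Equiv.swap p q * σ) = tropVal A row col σ := by
    unfold tropVal
    apply Finset.sum_congr rfl
    intro s _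
    rw [Equiv.Perm.mul_apply]
    rcases eq_or_ne (σ s) p with h | hsp
    · rw [h, Equiv.swap_apply_left]; exact (heq _).symm
    rcases eq_or_ne (σ s) q with h | hsq
    · rw [h, Equiv.swap_apply_right]; exact heq _
    · rw [Equiv.swap_apply_of_ne_of_ne hsp hsq]
  have hpq' : σ⁻¹ p ≠ σ⁻¹ q := fun h => hpq (by simpa using congrArg σ h)
  have hne : tropPairs row col σ ≠ tropPairs row col (Equiv.swap p q * σ) := by
    rw [hconj]
    exact tropPairs_ne_mul_swap row col σ _ _ hpq' (hrow.ne hpq')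
      (by simpa using hcne)
  exact ⟨σ, Equiv.swap p q * σ, hne, hmin, fun π => hval ▸ hmin π⟩


def gdown {n : ℕ} (hn : 1 ≤ n) : Fin (n + 1) → Fin n :=
  fun s => ⟨min (s : ℕ) (n - 1), by omega⟩


/-- Lemma 6 of the paper: Duplicating the last row and column of a symmetric
matrix of symmetric tropical rank `r` yields a symmetric matrix of symmetric tropical rank `r`. -/
theorem stmt15 (n r : ℕ) (hn : 1 ≤ n) (A : Matrix (Fin n) (Fin n) ℝ) (hA : A.IsSymm)
    (hr : symTropicalRank A = r)
    (A2 : Matrix (Fin (n + 1)) (Fin (n + 1)) ℝ)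
    (hA2 : ∀ s t : Fin (n + 1),
      A2 s t = A ⟨min (s : ℕ) (n - 1), by omega⟩ ⟨min (t : ℕ) (n - 1), by omega⟩) :
    A2.IsSymm ∧ symTropicalRank A2 = r := by
  have hA2' : ∀ s t, A2 s t = A (gdown hn s) (gdown hn t) := fun s t => hA2 s t
  have hAapp : ∀ i j, A i j = A j i := fun i j => hA.apply j i
  constructor
  · ext s t
    rw [Matrix.transpose_apply, hA2' t s, hA2' s t, hAapp]
  · rw [← hr]
    unfold symTropicalRank
    congr 1
    ext r'
    simp only [Set.mem_setOf_eq]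
    constructor
    · rintro ⟨row, col, hrow, hcol, hns⟩
      -- row cannot hit both n-1 and n
      have hrtop : ∀ p q : Fin r', ¬(((row p : ℕ) = n - 1) ∧ ((row q : ℕ) = n)) := by
        rintro p q ⟨hp, hq⟩
        have hpq : p ≠ q := by intro h; rw [h, hq] at hp; omega
        refine hns (symTropSing_of_dup_rows A2 row col hcol.injective p q hpq
          (fun h => by rw [h, hq] at hp; omega) (fun t => ?_))
        rw [hA2', hA2']
        have hgg : gdown hn (row p) = gdown hn (row q) := by
          apply Fin.ext
          show min ((row p : ℕ)) (n - 1) = min ((row q : ℕ)) (n - 1)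
          omega
        rw [hgg]
      have hctop : ∀ p q : Fin r', ¬(((col p : ℕ) = n - 1) ∧ ((col q : ℕ) = n)) := by
        rintro p q ⟨hp, hq⟩
        have hpq : p ≠ q := by intro h; rw [h, hq] at hp; omega
        refine hns (symTropSing_of_dup_cols A2 row col hrow.injective p q hpq
          (fun h => by rw [h, hq] at hp; omega) (fun s => ?_))
        rw [hA2', hA2']
        have hgg : gdown hn (col p) = gdown hn (col q) := by
          apply Fin.ext
          show min ((col p : ℕ)) (n - 1) = min ((col q : ℕ)) (n - 1)
          omega
        rw [hgg]
      refine ⟨gdown hn ∘ row, gdown hn ∘ col, ?_, ?_, ?_⟩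
      · intro i j hij
        have h1 : (row i : ℕ) < row j := hrow hij
        have h2 : (row j : ℕ) ≤ n := by omega
        have h3 : (row j : ℕ) = n → (row i : ℕ) ≠ n - 1 := fun h hh => hrtop i j ⟨hh, h⟩
        show min ((row i : ℕ)) (n - 1) < min ((row j : ℕ)) (n - 1)
        rcases eq_or_ne ((row j : ℕ)) n with h | h
        · have := h3 h; omega
        · have : (row j : ℕ) < n := by omega
          omega
      · intro i j hij
        have h1 : (col i : ℕ) < col j := hcol hij
        have h2 : (col j : ℕ) ≤ n := by omega
        have h3 : (col j : ℕ) = n → (col i : ℕ) ≠ n - 1 := fun h hh => hctop i j ⟨hh, h⟩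
        show min ((col i : ℕ)) (n - 1) < min ((col j : ℕ)) (n - 1)
        rcases eq_or_ne ((col j : ℕ)) n with h | h
        · have := h3 h; omega
        · have : (col j : ℕ) < n := by omega
          omega
      · intro hsing
        exact hns (symTropSing_comp_s15 A2 A row col (gdown hn)
          (fun s t => (hA2' (row s) (col t)).symm) hsing)
    · rintro ⟨row, col, hrow, hcol, hns⟩
      refine ⟨Fin.castSucc ∘ row, Fin.castSucc ∘ col, ?_, ?_, ?_⟩
      · exact fun i j hij => hrow hij
      · exact fun i j hij => hcol hij
      · intro hsing
        refine hns (symTropSing_comp_s15 A A2 row col Fin.castSucc (fun s t => ?_) hsing)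
        rw [hA2']
        have h1 : gdown hn (Fin.castSucc (row s)) = row s := by
          apply Fin.ext
          show min ((row s : ℕ)) (n - 1) = (row s : ℕ)
          have := (row s).isLt
          omega
        have h2 : gdown hn (Fin.castSucc (col t)) = col t := by
          apply Fin.ext
          show min ((col t : ℕ)) (n - 1) = (col t : ℕ)
          have := (col t).isLt
          omega
        rw [h1, h2]

end
end

section
/- Let A be an n×n real symmetric matrix with symmetric tropical rank r, let M be a real number less than every entry of A and P a real number greater than every entry of A, and let A' be the (n+1)×(n+1) real symmetric matrix whose top-left n×n block is A, whose entries in the last row and last column off the diagonal all equal P, and whose bottom-right diagonal entry is M. Then A' has symmetric tropical rank r+1. -/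
/-!
Common definitions for tropical geometry of symmetric matrices, following
Develin–Santos–Sturmfels and the paper under formalization.
-/

open Matrix

noncomputable section

/-! ### Auxiliary lemmas for Statement 17 -/

def insPerm {t : ℕ} (j : Fin (t + 1)) (σ : Equiv.Perm (Fin t)) : Equiv.Perm (Fin (t + 1)) :=
  ((finSuccEquiv' (Fin.last t)).trans (Equiv.optionCongr σ)).trans (finSuccEquiv' j).symm

lemma insPerm_castSucc {t : ℕ} (j : Fin (t + 1)) (σ : Equiv.Perm (Fin t)) (i : Fin t) :
    insPerm j σ i.castSucc = j.succAbove (σ i) := by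
  have h1 : finSuccEquiv' (Fin.last t) i.castSucc = some i := by
    rw [← Fin.succAbove_last_apply, finSuccEquiv'_succAbove]
  simp [insPerm, h1, finSuccEquiv'_symm_some]

lemma insPerm_last {t : ℕ} (j : Fin (t + 1)) (σ : Equiv.Perm (Fin t)) :
    insPerm j σ (Fin.last t) = j := by
  simp [insPerm, finSuccEquiv'_at, finSuccEquiv'_symm_none]

lemma exists_insPerm {t : ℕ} (π : Equiv.Perm (Fin (t + 1))) :
    ∃ σ : Equiv.Perm (Fin t), π = insPerm (π (Fin.last t)) σ := by
  have hne : ∀ i : Fin t, π i.castSucc ≠ π (Fin.last t) := by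
    intro i h
    exact absurd (π.injective h) (Fin.ne_of_lt (Fin.castSucc_lt_last i))
  choose f hf using fun i => Fin.exists_succAbove_eq (hne i)
  have hfinj : Function.Injective f := by
    intro a b hab
    have h : π a.castSucc = π b.castSucc := by rw [← hf a, ← hf b, hab]
    exact Fin.castSucc_injective _ (π.injective h)
  refine ⟨Equiv.ofBijective f (Finite.injective_iff_bijective.mp hfinj), ?_⟩
  ext x
  induction x using Fin.lastCases with
  | last => rw [insPerm_last]
  | cast i => rw [insPerm_castSucc]; exact congrArg Fin.val (hf i).symm

lemma tropVal_insPerm {m t : ℕ} (B : Matrix (Fin m) (Fin m) ℝ) (row col : Fin (t + 1) → Fin m)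
    (j : Fin (t + 1)) (σ : Equiv.Perm (Fin t)) :
    tropVal B row col (insPerm j σ) =
      (∑ i : Fin t, B (row i.castSucc) (col (j.succAbove (σ i)))) +
        B (row (Fin.last t)) (col j) := by
  rw [tropVal, Fin.sum_univ_castSucc, insPerm_last]
  congr 1
  exact Finset.sum_congr rfl fun i _ => by rw [insPerm_castSucc]

lemma tropPairs_insPerm {m t : ℕ} (row col : Fin (t + 1) → Fin m)
    (j : Fin (t + 1)) (σ : Equiv.Perm (Fin t)) :
    tropPairs row col (insPerm j σ) =
      Sym2.mk (row (Fin.last t)) (col j) ::ₘ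
        Multiset.map (fun i : Fin t => Sym2.mk (row i.castSucc) (col (j.succAbove (σ i))))
          Finset.univ.val := by
  rw [tropPairs, Fin.univ_castSuccEmb]
  simp only [Finset.cons_val, Multiset.map_cons, insPerm_last, Finset.map_val,
    Multiset.map_map, Function.comp]
  congr 1
  refine Multiset.map_congr rfl fun i _ => ?_
  show Sym2.mk (row (Fin.castSucc i)) (col ((insPerm j σ) (Fin.castSucc i))) = _
  rw [insPerm_castSucc]

lemma tropVal_ins_eq {n t : ℕ} (A : Matrix (Fin n) (Fin n) ℝ)
    (B : Matrix (Fin (n + 1)) (Fin (n + 1)) ℝ)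
    (hlt : ∀ a b : Fin n, B a.castSucc b.castSucc = A a b)
    (row' col' : Fin (t + 1) → Fin (n + 1)) (row col : Fin t → Fin n) (j : Fin (t + 1))
    (hrow : ∀ i : Fin t, row' i.castSucc = (row i).castSucc)
    (hcolj : ∀ k : Fin t, col' (j.succAbove k) = (col k).castSucc)
    (σ : Equiv.Perm (Fin t)) :
    tropVal B row' col' (insPerm j σ) = tropVal A row col σ + B (row' (Fin.last t)) (col' j) := by
  rw [tropVal_insPerm]
  congr 1
  rw [tropVal]
  exact Finset.sum_congr rfl fun i _ => by rw [hrow, hcolj, hlt]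

lemma tropPairs_ins_eq {n t : ℕ}
    (row' col' : Fin (t + 1) → Fin (n + 1)) (row col : Fin t → Fin n) (j : Fin (t + 1))
    (hrow : ∀ i : Fin t, row' i.castSucc = (row i).castSucc)
    (hcolj : ∀ k : Fin t, col' (j.succAbove k) = (col k).castSucc)
    (σ : Equiv.Perm (Fin t)) :
    tropPairs row' col' (insPerm j σ) =
      Sym2.mk (row' (Fin.last t)) (col' j) ::ₘ
        Multiset.map (Sym2.map Fin.castSucc) (tropPairs row col σ) := by
  rw [tropPairs_insPerm]
  congr 1
  rw [tropPairs, Multiset.map_map]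
  exact Multiset.map_congr rfl fun i _ => by
    simp [Function.comp, hrow, hcolj, Sym2.map_pair_eq]

lemma tropPairs_ins_ne {n t : ℕ}
    (row' col' : Fin (t + 1) → Fin (n + 1)) (row col : Fin t → Fin n) (j : Fin (t + 1))
    (hrow : ∀ i : Fin t, row' i.castSucc = (row i).castSucc)
    (hcolj : ∀ k : Fin t, col' (j.succAbove k) = (col k).castSucc)
    {σ τ : Equiv.Perm (Fin t)} (h : tropPairs row col σ ≠ tropPairs row col τ) :
    tropPairs row' col' (insPerm j σ) ≠ tropPairs row' col' (insPerm j τ) := by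
  rw [tropPairs_ins_eq row' col' row col j hrow hcolj,
    tropPairs_ins_eq row' col' row col j hrow hcolj]
  intro heq
  exact h (Multiset.map_injective (Sym2.map.injective (Fin.castSucc_injective n))
    ((Multiset.cons_inj_right _).mp heq))

lemma tropVal_transpose {m s : ℕ} (B : Matrix (Fin m) (Fin m) ℝ) (row col : Fin s → Fin m)
    (σ : Equiv.Perm (Fin s)) : tropVal Bᵀ col row σ⁻¹ = tropVal B row col σ := by
  rw [tropVal, tropVal]
  calc ∑ x, Bᵀ (col x) (row (σ⁻¹ x))
      = ∑ x, B (row (σ⁻¹ x)) (col (σ (σ⁻¹ x))) := by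
        exact Finset.sum_congr rfl fun x _ => by simp [Matrix.transpose_apply]
    _ = ∑ x, B (row x) (col (σ x)) := Equiv.sum_comp σ⁻¹ (fun x => B (row x) (col (σ x)))

lemma tropPairs_transpose {m s : ℕ} (row col : Fin s → Fin m) (σ : Equiv.Perm (Fin s)) :
    tropPairs col row σ⁻¹ = tropPairs row col σ := by
  rw [tropPairs, tropPairs]
  have huniv : Finset.univ.val.map ⇑σ = Finset.univ.val := by
    have h := congrArg Finset.val (Finset.map_univ_equiv σ)
    rwa [Finset.map_val] at h
  calc (Finset.univ.val.map fun x => Sym2.mk (col x) (row (σ⁻¹ x)))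
      = ((Finset.univ.val.map ⇑σ).map fun x => Sym2.mk (col x) (row (σ⁻¹ x))) := by rw [huniv]
    _ = (Finset.univ.val.map fun x => Sym2.mk (col (σ x)) (row (σ⁻¹ (σ x)))) := by
        rw [Multiset.map_map]; rfl
    _ = (Finset.univ.val.map fun x => Sym2.mk (row x) (col (σ x))) := by
        refine Multiset.map_congr rfl fun x _ => ?_
        rw [show σ⁻¹ (σ x) = x from σ.symm_apply_apply x]
        exact Sym2.eq_swap

lemma symTropSing_transpose_s17 {m s : ℕ} {B : Matrix (Fin m) (Fin m) ℝ} {row col : Fin s → Fin m}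
    (h : SymTropSing B row col) : SymTropSing Bᵀ col row := by
  obtain ⟨σ, τ, hne, hσ, hτ⟩ := h
  have hmin : ∀ ρ : Equiv.Perm (Fin s), Minimizing B row col ρ → Minimizing Bᵀ col row ρ⁻¹ := by
    intro ρ hρ π
    have h1 : tropVal Bᵀ col row π = tropVal B row col π⁻¹ := by
      rw [← tropVal_transpose B row col π⁻¹, inv_inv]
    rw [tropVal_transpose, h1]
    exact hρ π⁻¹
  exact ⟨σ⁻¹, τ⁻¹, by rw [tropPairs_transpose, tropPairs_transpose]; exact hne,
    hmin σ hσ, hmin τ hτ⟩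

lemma noBorder_sing {n s : ℕ} (A : Matrix (Fin n) (Fin n) ℝ)
    (B : Matrix (Fin (n + 1)) (Fin (n + 1)) ℝ)
    (hlt : ∀ a b : Fin n, B a.castSucc b.castSucc = A a b)
    (row col : Fin s → Fin n) (row' col' : Fin s → Fin (n + 1))
    (hrow : ∀ i, row' i = (row i).castSucc) (hcol : ∀ i, col' i = (col i).castSucc)
    (h : SymTropSing A row col) : SymTropSing B row' col' := by
  have hval : ∀ ρ, tropVal B row' col' ρ = tropVal A row col ρ := by
    intro ρ; rw [tropVal, tropVal]
    exact Finset.sum_congr rfl fun i _ => by rw [hrow, hcol, hlt]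
  have hpairs : ∀ ρ, tropPairs row' col' ρ =
      Multiset.map (Sym2.map Fin.castSucc) (tropPairs row col ρ) := by
    intro ρ; rw [tropPairs, tropPairs, Multiset.map_map]
    exact Multiset.map_congr rfl fun i _ => by simp [Function.comp, hrow, hcol, Sym2.map_pair_eq]
  obtain ⟨σ, τ, hne, hσ, hτ⟩ := h
  refine ⟨σ, τ, ?_, fun ρ => by rw [hval, hval]; exact hσ ρ, fun ρ => by rw [hval, hval]; exact hτ ρ⟩
  rw [hpairs, hpairs]
  intro heq
  exact hne (Multiset.map_injective (Sym2.map.injective (Fin.castSucc_injective n)) heq)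

lemma borderRow_sing {n t : ℕ} (A : Matrix (Fin n) (Fin n) ℝ) (P : ℝ)
    (B : Matrix (Fin (n + 1)) (Fin (n + 1)) ℝ)
    (hlt : ∀ a b : Fin n, B a.castSucc b.castSucc = A a b)
    (hrowP : ∀ b : Fin n, B (Fin.last n) b.castSucc = P)
    (row : Fin t → Fin n) (col : Fin (t + 1) → Fin n)
    (row' col' : Fin (t + 1) → Fin (n + 1))
    (hrow : ∀ i : Fin t, row' i.castSucc = (row i).castSucc)
    (hrowlast : row' (Fin.last t) = Fin.last n)
    (hcol : ∀ k, col' k = (col k).castSucc)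
    (hsing : ∀ j : Fin (t + 1), SymTropSing A row (col ∘ j.succAbove)) :
    SymTropSing B row' col' := by
  obtain ⟨π₀, -, hπ₀⟩ := Finset.exists_min_image Finset.univ (tropVal B row' col')
    Finset.univ_nonempty
  obtain ⟨σ₀, hσ₀⟩ := exists_insPerm π₀
  set j := π₀ (Fin.last t) with hj
  obtain ⟨σ, τ, hne, hσ, hτ⟩ := hsing j
  have hcolj : ∀ k : Fin t, col' (j.succAbove k) = ((col ∘ j.succAbove) k).castSucc :=
    fun k => hcol _
  have hval : ∀ ρ : Equiv.Perm (Fin t),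
      tropVal B row' col' (insPerm j ρ) = tropVal A row (col ∘ j.succAbove) ρ + P := by
    intro ρ
    rw [tropVal_ins_eq A B hlt row' col' row (col ∘ j.succAbove) j hrow hcolj, hrowlast,
      hcol, hrowP]
  have key : ∀ ρ, Minimizing A row (col ∘ j.succAbove) ρ →
      Minimizing B row' col' (insPerm j ρ) := by
    intro ρ hρ π'
    calc tropVal B row' col' (insPerm j ρ)
        = tropVal A row (col ∘ j.succAbove) ρ + P := hval ρ
      _ ≤ tropVal A row (col ∘ j.succAbove) σ₀ + P := add_le_add_left (hρ σ₀) P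
      _ = tropVal B row' col' π₀ := by rw [← hval σ₀, ← hσ₀]
      _ ≤ tropVal B row' col' π' := hπ₀ π' (Finset.mem_univ π')
  exact ⟨insPerm j σ, insPerm j τ,
    tropPairs_ins_ne row' col' row (col ∘ j.succAbove) j hrow hcolj hne, key σ hσ, key τ hτ⟩

lemma borderBoth_swap {n t : ℕ} (A : Matrix (Fin n) (Fin n) ℝ) (M P : ℝ)
    (hM : ∀ i j, M < A i j) (hP : ∀ i j, A i j < P)
    (B : Matrix (Fin (n + 1)) (Fin (n + 1)) ℝ)
    (hlt : ∀ a b : Fin n, B a.castSucc b.castSucc = A a b)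
    (hrowP : ∀ b : Fin n, B (Fin.last n) b.castSucc = P)
    (hcolP : ∀ a : Fin n, B a.castSucc (Fin.last n) = P)
    (hcorner : B (Fin.last n) (Fin.last n) = M)
    (row col : Fin t → Fin n) (row' col' : Fin (t + 1) → Fin (n + 1))
    (hrow : ∀ i : Fin t, row' i.castSucc = (row i).castSucc)
    (hrowlast : row' (Fin.last t) = Fin.last n)
    (hcol : ∀ i : Fin t, col' i.castSucc = (col i).castSucc)
    (hcollast : col' (Fin.last t) = Fin.last n)
    (π : Equiv.Perm (Fin (t + 1))) (hπ : π (Fin.last t) ≠ Fin.last t) :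
    ∃ π' : Equiv.Perm (Fin (t + 1)), π' (Fin.last t) = Fin.last t ∧
      tropVal B row' col' π' < tropVal B row' col' π := by
  obtain ⟨k, hπk⟩ : ∃ k, π k = Fin.last t :=
    ⟨π⁻¹ (Fin.last t), π.apply_symm_apply _⟩
  have hkne : k ≠ Fin.last t := by
    intro h
    exact hπ (h ▸ hπk)
  obtain ⟨k₀, hk₀⟩ := Fin.exists_castSucc_eq.mpr hkne
  obtain ⟨m, hm⟩ := Fin.exists_castSucc_eq.mpr hπ
  have hMP : M < P := lt_trans (hM (col m) (col m)) (hP (col m) (col m))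
  have e1 : (π * Equiv.swap k (Fin.last t)) (Fin.last t) = π k := by
    rw [Equiv.Perm.mul_apply, Equiv.swap_apply_right]
  have e3 : col' (π (Fin.last t)) = (col m).castSucc := by rw [← hm, hcol]
  refine ⟨π * Equiv.swap k (Fin.last t), by rw [e1, hπk], ?_⟩
  rw [tropVal, tropVal]
  apply Finset.sum_lt_sum
  · intro x _
    by_cases hxk : x = k
    · subst hxk
      have f1 : (π * Equiv.swap x (Fin.last t)) x = π (Fin.last t) := by
        rw [Equiv.Perm.mul_apply, Equiv.swap_apply_left]
      have f2 : row' x = (row k₀).castSucc := by rw [← hk₀, hrow]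
      have f4 : col' (π x) = Fin.last n := by rw [hπk, hcollast]
      rw [f1, f2, e3, f4, hlt, hcolP]
      exact (hP _ _).le
    by_cases hxl : x = Fin.last t
    · subst hxl
      rw [e1, hπk, hrowlast, hcollast, hcorner, e3, hrowP]
      exact hMP.le
    · rw [Equiv.Perm.mul_apply, Equiv.swap_apply_of_ne_of_ne hxk hxl]
  · refine ⟨Fin.last t, Finset.mem_univ _, ?_⟩
    rw [e1, hπk, hrowlast, hcollast, hcorner, e3, hrowP]
    exact hMP

lemma borderBoth_iff {n t : ℕ} (A : Matrix (Fin n) (Fin n) ℝ) (M P : ℝ)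
    (hM : ∀ i j, M < A i j) (hP : ∀ i j, A i j < P)
    (B : Matrix (Fin (n + 1)) (Fin (n + 1)) ℝ)
    (hlt : ∀ a b : Fin n, B a.castSucc b.castSucc = A a b)
    (hrowP : ∀ b : Fin n, B (Fin.last n) b.castSucc = P)
    (hcolP : ∀ a : Fin n, B a.castSucc (Fin.last n) = P)
    (hcorner : B (Fin.last n) (Fin.last n) = M)
    (row col : Fin t → Fin n) (row' col' : Fin (t + 1) → Fin (n + 1))
    (hrow : ∀ i : Fin t, row' i.castSucc = (row i).castSucc)
    (hrowlast : row' (Fin.last t) = Fin.last n)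
    (hcol : ∀ i : Fin t, col' i.castSucc = (col i).castSucc)
    (hcollast : col' (Fin.last t) = Fin.last n) :
    SymTropSing B row' col' ↔ SymTropSing A row col := by
  have hcolj : ∀ k : Fin t, col' ((Fin.last t).succAbove k) = (col k).castSucc := by
    intro k
    rw [Fin.succAbove_last_apply]
    exact hcol k
  have hval : ∀ ρ : Equiv.Perm (Fin t),
      tropVal B row' col' (insPerm (Fin.last t) ρ) = tropVal A row col ρ + M := by
    intro ρ
    rw [tropVal_ins_eq A B hlt row' col' row col (Fin.last t) hrow hcolj, hrowlast,
      hcollast, hcorner]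
  have fixlast : ∀ π, Minimizing B row' col' π → π (Fin.last t) = Fin.last t := by
    intro π hmin
    by_contra h
    obtain ⟨π', -, hπ'⟩ := borderBoth_swap A M P hM hP B hlt hrowP hcolP hcorner
      row col row' col' hrow hrowlast hcol hcollast π h
    exact absurd (hmin π') (not_le.mpr hπ')
  constructor
  · rintro ⟨σ', τ', hne, hσ', hτ'⟩
    obtain ⟨σ, hσ⟩ := exists_insPerm σ'
    obtain ⟨τ, hτ⟩ := exists_insPerm τ'
    rw [fixlast σ' hσ'] at hσ
    rw [fixlast τ' hτ'] at hτ
    subst hσ hτ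
    refine ⟨σ, τ, ?_, ?_, ?_⟩
    · intro h
      apply hne
      rw [tropPairs_ins_eq row' col' row col _ hrow hcolj,
        tropPairs_ins_eq row' col' row col _ hrow hcolj, h]
    · intro ρ
      have h1 := hσ' (insPerm (Fin.last t) ρ)
      rw [hval, hval] at h1
      linarith
    · intro ρ
      have h1 := hτ' (insPerm (Fin.last t) ρ)
      rw [hval, hval] at h1
      linarith
  · rintro ⟨σ, τ, hne, hσ, hτ⟩
    have key : ∀ ρ, Minimizing A row col ρ → Minimizing B row' col' (insPerm (Fin.last t) ρ) := by
      intro ρ hρ π'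
      rcases eq_or_ne (π' (Fin.last t)) (Fin.last t) with hfix | hfix
      · obtain ⟨σ', hσ'⟩ := exists_insPerm π'
        rw [hfix] at hσ'
        rw [hσ', hval, hval]
        exact add_le_add_left (hρ σ') M
      · obtain ⟨π'', hfix'', hlt''⟩ := borderBoth_swap A M P hM hP B hlt hrowP hcolP hcorner
          row col row' col' hrow hrowlast hcol hcollast π' hfix
        obtain ⟨σ'', hσ''⟩ := exists_insPerm π''
        rw [hfix''] at hσ''
        have h1 : tropVal B row' col' (insPerm (Fin.last t) ρ) ≤ tropVal B row' col' π'' := by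
          rw [hσ'', hval, hval]
          exact add_le_add_left (hρ σ'') M
        linarith
    exact ⟨insPerm _ σ, insPerm _ τ, tropPairs_ins_ne row' col' row col _ hrow hcolj hne,
      key σ hσ, key τ hτ⟩

lemma snoc_castSucc_strictMono {t n : ℕ} {f : Fin t → Fin n} (hf : StrictMono f) :
    StrictMono (Fin.snoc (fun i => (f i).castSucc) (Fin.last n) : Fin (t + 1) → Fin (n + 1)) := by
  intro a b hab
  rcases eq_or_ne b (Fin.last t) with rfl | hb
  · obtain ⟨a', rfl⟩ := Fin.exists_castSucc_eq.mpr (Fin.ne_of_lt hab)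
    simp only [Fin.snoc_castSucc, Fin.snoc_last]
    exact Fin.castSucc_lt_last _
  · obtain ⟨b', rfl⟩ := Fin.exists_castSucc_eq.mpr hb
    have ha : a ≠ Fin.last t :=
      Fin.ne_of_lt (lt_trans hab (Fin.castSucc_lt_last b'))
    obtain ⟨a', rfl⟩ := Fin.exists_castSucc_eq.mpr ha
    simp only [Fin.snoc_castSucc]
    exact Fin.castSucc_lt_castSucc_iff.mpr (hf (Fin.castSucc_lt_castSucc_iff.mp hab))

lemma zero_mem_rank_set {m : ℕ} (C : Matrix (Fin m) (Fin m) ℝ) :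
    0 ∈ {s | ∃ row col : Fin s → Fin m,
      StrictMono row ∧ StrictMono col ∧ ¬ SymTropSing C row col} := by
  refine ⟨Fin.elim0, Fin.elim0, fun a => a.elim0, fun a => a.elim0, ?_⟩
  rintro ⟨σ, τ, hne, -, -⟩
  exact hne (by simp [tropPairs])

lemma rank_set_bdd {m : ℕ} (C : Matrix (Fin m) (Fin m) ℝ) :
    ∀ s ∈ {s | ∃ row col : Fin s → Fin m,
      StrictMono row ∧ StrictMono col ∧ ¬ SymTropSing C row col}, s ≤ m := by
  rintro s ⟨row, -, hrow, -, -⟩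
  simpa using Fintype.card_le_of_injective row hrow.injective

set_option maxRecDepth 8000 in
/-- Lemma 7 of the paper: Bordering a symmetric matrix of symmetric tropical rank
`r` by a row and column of entries `P` (greater than every entry of `A`) with corner `M` (less
than every entry of `A`) yields a matrix of symmetric tropical rank `r + 1`. -/
theorem stmt17 (n r : ℕ) (A : Matrix (Fin n) (Fin n) ℝ) (hA : A.IsSymm)
    (hr : symTropicalRank A = r) (M P : ℝ)
    (hM : ∀ i j, M < A i j) (hP : ∀ i j, A i j < P)
    (A' : Matrix (Fin (n + 1)) (Fin (n + 1)) ℝ)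
    (hA' : ∀ i j : Fin (n + 1),
      A' i j =
        if h : (i : ℕ) < n ∧ (j : ℕ) < n then A ⟨(i : ℕ), h.1⟩ ⟨(j : ℕ), h.2⟩
        else if (i : ℕ) = n ∧ (j : ℕ) = n then M
        else P) :
    symTropicalRank A' = r + 1 := by
  classical
  -- entry facts
  have hlt : ∀ a b : Fin n, A' a.castSucc b.castSucc = A a b := by
    intro a b
    rw [hA', dif_pos (show ((a.castSucc : Fin (n+1)) : ℕ) < n ∧ ((b.castSucc : Fin (n+1)) : ℕ) < n
      from ⟨by simp, by simp⟩)]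
    congr 1 <;> exact Fin.ext (by simp)
  have hrowP : ∀ b : Fin n, A' (Fin.last n) b.castSucc = P := by
    intro b
    have hb := b.isLt
    rw [hA', dif_neg (by simp), if_neg (by simp; omega)]
  have hcolP : ∀ a : Fin n, A' a.castSucc (Fin.last n) = P := by
    intro a
    have ha := a.isLt
    rw [hA', dif_neg (by simp), if_neg (by simp; omega)]
  have hcorner : A' (Fin.last n) (Fin.last n) = M := by
    rw [hA', dif_neg (by simp), if_pos (by simp)]
  have hAT : A'ᵀ = A' := by
    ext i j
    rw [Matrix.transpose_apply, hA' j i, hA' i j]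
    by_cases h1 : (j : ℕ) < n ∧ (i : ℕ) < n
    · rw [dif_pos h1, dif_pos ⟨h1.2, h1.1⟩]
      exact hA.apply _ _
    · rw [dif_neg h1, dif_neg (fun h => h1 ⟨h.2, h.1⟩)]
      by_cases h2 : (j : ℕ) = n ∧ (i : ℕ) = n
      · rw [if_pos h2, if_pos ⟨h2.2, h2.1⟩]
      · rw [if_neg h2, if_neg (fun h => h2 ⟨h.2, h.1⟩)]
  -- facts about the rank set of A
  have hmemA : r ∈ {s | ∃ row col : Fin s → Fin n,
      StrictMono row ∧ StrictMono col ∧ ¬ SymTropSing A row col} := by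
    rw [← hr]
    exact Nat.sSup_mem ⟨0, zero_mem_rank_set A⟩ ⟨n, fun s hs => rank_set_bdd A s hs⟩
  have hleA : ∀ s ∈ {s | ∃ row col : Fin s → Fin n,
      StrictMono row ∧ StrictMono col ∧ ¬ SymTropSing A row col}, s ≤ r := by
    intro s hs
    rw [← hr]
    exact le_csSup ⟨n, fun u hu => rank_set_bdd A u hu⟩ hs
  have hsing : ∀ t : ℕ, r < t → ∀ row col : Fin t → Fin n, StrictMono row → StrictMono col →
      SymTropSing A row col := by
    intro t hrt row col hrow hcol
    by_contra h
    exact absurd (hleA t ⟨row, col, hrow, hcol, h⟩) (Nat.not_le.mpr hrt)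
  -- r+1 is achieved by A'
  have hmem' : r + 1 ∈ {s | ∃ row col : Fin s → Fin (n+1),
      StrictMono row ∧ StrictMono col ∧ ¬ SymTropSing A' row col} := by
    obtain ⟨row, col, hrow, hcol, hns⟩ := hmemA
    refine ⟨Fin.snoc (fun i => (row i).castSucc) (Fin.last n),
            Fin.snoc (fun i => (col i).castSucc) (Fin.last n),
            snoc_castSucc_strictMono hrow, snoc_castSucc_strictMono hcol, fun hsg => hns ?_⟩
    exact (borderBoth_iff A M P hM hP A' hlt hrowP hcolP hcorner row col
      (Fin.snoc (fun i => (row i).castSucc) (Fin.last n))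
      (Fin.snoc (fun i => (col i).castSucc) (Fin.last n))
      (fun i => by simp) (by simp) (fun i => by simp) (by simp)).mp hsg
  -- upper bound
  have hub : ∀ s ∈ {s | ∃ row col : Fin s → Fin (n+1),
      StrictMono row ∧ StrictMono col ∧ ¬ SymTropSing A' row col}, s ≤ r + 1 := by
    rintro s ⟨row', col', hrow', hcol', hns⟩
    by_contra hgt
    push_neg at hgt
    obtain ⟨t, rfl⟩ : ∃ t, s = t + 1 := ⟨s - 1, by omega⟩
    have hrt : r < t := by omega
    apply hns
    have hborder : ∀ f : Fin (t+1) → Fin (n+1), StrictMono f → (¬ ∀ i, (f i : ℕ) < n) →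
        f (Fin.last t) = Fin.last n ∧ ∀ i : Fin t, (f i.castSucc : ℕ) < n := by
      intro f hf hnf
      push_neg at hnf
      obtain ⟨k, hk⟩ := hnf
      have hkl : f k = Fin.last n := by
        have h2 := (f k).isLt
        apply Fin.ext
        simp only [Fin.val_last]
        omega
      have hkeq : k = Fin.last t := by
        by_contra hne
        have h1 := hf (lt_of_le_of_ne (Fin.le_last k) hne)
        rw [hkl] at h1
        exact absurd h1 (not_lt.mpr (Fin.le_last _))
      have hl : f (Fin.last t) = Fin.last n := by rw [← hkeq]; exact hkl
      refine ⟨hl, fun i => ?_⟩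
      have h1 := hf (Fin.castSucc_lt_last i)
      rw [hl] at h1
      simpa [Fin.lt_def] using h1
    by_cases hR : ∀ i : Fin (t+1), (row' i : ℕ) < n
    · have hrm : StrictMono (fun i : Fin (t+1) => (⟨(row' i : ℕ), hR i⟩ : Fin n)) :=
        by
        intro a b hab
        have h := hrow' hab
        rw [Fin.lt_def] at h
        exact Fin.mk_lt_mk.mpr h
      by_cases hC : ∀ i : Fin (t+1), (col' i : ℕ) < n
      · have hcm : StrictMono (fun i : Fin (t+1) => (⟨(col' i : ℕ), hC i⟩ : Fin n)) :=
          by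
          intro a b hab
          have h := hcol' hab
          rw [Fin.lt_def] at h
          exact Fin.mk_lt_mk.mpr h
        exact noBorder_sing A A' hlt (fun i => ⟨(row' i : ℕ), hR i⟩)
          (fun i => ⟨(col' i : ℕ), hC i⟩) row' col'
          (fun i => Fin.ext (by simp)) (fun i => Fin.ext (by simp))
          (hsing (t+1) (by omega) _ _ hrm hcm)
      · obtain ⟨hclast, hcs⟩ := hborder col' hcol' hC
        have hcm : StrictMono (fun i : Fin t => (⟨(col' i.castSucc : ℕ), hcs i⟩ : Fin n)) :=
          by
            intro a b hab
            have h := hcol' (Fin.castSucc_lt_castSucc_iff.mpr hab)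
            rw [Fin.lt_def] at h
            exact Fin.mk_lt_mk.mpr h
        have hsw : SymTropSing A' col' row' := by
          refine borderRow_sing A P A' hlt hrowP
            (fun i => ⟨(col' i.castSucc : ℕ), hcs i⟩)
            (fun k => ⟨(row' k : ℕ), hR k⟩) col' row'
            (fun i => Fin.ext (by simp)) hclast (fun k => Fin.ext (by simp)) ?_
          intro j
          exact hsing t hrt _ _ hcm (hrm.comp (Fin.strictMono_succAbove j))
        have h2 := symTropSing_transpose_s17 hsw
        rwa [hAT] at h2
    · obtain ⟨hrlast, hrs⟩ := hborder row' hrow' hR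
      have hrm : StrictMono (fun i : Fin t => (⟨(row' i.castSucc : ℕ), hrs i⟩ : Fin n)) :=
        by
          intro a b hab
          have h := hrow' (Fin.castSucc_lt_castSucc_iff.mpr hab)
          rw [Fin.lt_def] at h
          exact Fin.mk_lt_mk.mpr h
      by_cases hC : ∀ i : Fin (t+1), (col' i : ℕ) < n
      · have hcm : StrictMono (fun i : Fin (t+1) => (⟨(col' i : ℕ), hC i⟩ : Fin n)) :=
          by
          intro a b hab
          have h := hcol' hab
          rw [Fin.lt_def] at h
          exact Fin.mk_lt_mk.mpr h
        refine borderRow_sing A P A' hlt hrowP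
          (fun i => ⟨(row' i.castSucc : ℕ), hrs i⟩)
          (fun k => ⟨(col' k : ℕ), hC k⟩) row' col'
          (fun i => Fin.ext (by simp)) hrlast (fun k => Fin.ext (by simp)) ?_
        intro j
        exact hsing t hrt _ _ hrm (hcm.comp (Fin.strictMono_succAbove j))
      · obtain ⟨hclast, hcs⟩ := hborder col' hcol' hC
        have hcm : StrictMono (fun i : Fin t => (⟨(col' i.castSucc : ℕ), hcs i⟩ : Fin n)) :=
          by
            intro a b hab
            have h := hcol' (Fin.castSucc_lt_castSucc_iff.mpr hab)
            rw [Fin.lt_def] at h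
            exact Fin.mk_lt_mk.mpr h
        exact (borderBoth_iff A M P hM hP A' hlt hrowP hcolP hcorner
          (fun i => ⟨(row' i.castSucc : ℕ), hrs i⟩)
          (fun i => ⟨(col' i.castSucc : ℕ), hcs i⟩) row' col'
          (fun i => Fin.ext (by simp)) hrlast (fun i => Fin.ext (by simp)) hclast).mpr
          (hsing t hrt _ _ hrm hcm)
  exact le_antisymm (csSup_le ⟨r + 1, hmem'⟩ hub)
    (le_csSup ⟨n + 1, fun u hu => rank_set_bdd A' u hu⟩ hmem')

end
end

section
/- Let A be the 3×3 real symmetric matrix with all diagonal entries equal to 1 and all off-diagonal entries equal to 0. Then: (a) A admits a (not necessarily symmetric) lift Ã over K with det(Ã) = 0, so A has Kapranov rank 2; and (b) every symmetric lift Ã of A over K satisfies det(Ã) ≠ 0, so A has symmetric Kapranov rank 3. -/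
set_option maxHeartbeats 1000000
set_option synthInstance.maxHeartbeats 1000000


/-!
Common definitions for tropical geometry of symmetric matrices, following
Develin–Santos–Sturmfels and the paper under formalization.
-/

open Matrix

noncomputable section

/-! ### Auxiliary lemmas for `stmt19` -/

lemma aux_order_eq_of_coeff {x : K} {g : ℝ} (h : x.coeff g ≠ 0)
    (hb : ∀ a < g, x.coeff a = 0) : x.order = g := by
  have hx : x ≠ 0 := HahnSeries.ne_zero_of_coeff_ne_zero h
  refine le_antisymm (HahnSeries.order_le_of_coeff_ne_zero h) ?_
  by_contra hlt
  push_neg at hlt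
  exact HahnSeries.coeff_order_eq_zero.not.2 hx (hb _ hlt)

lemma aux_mul_coeff_zero {x y : K} (hox : x.order = 0) (hoy : y.order = 0) :
    (x * y).coeff 0 = x.coeff 0 * y.coeff 0 := by
  have h := HahnSeries.coeff_mul_order_add_order x y
  rw [hox, hoy, add_zero] at h
  rw [h, HahnSeries.leadingCoeff_eq, HahnSeries.leadingCoeff_eq, hox, hoy]

lemma aux_det_ne_zero_of_symm_lift {A : Matrix (Fin 3) (Fin 3) ℝ}
    (hA : ∀ i j, A i j = if i = j then 1 else 0)
    {B : Matrix (Fin 3) (Fin 3) K} (hB : IsLift A B) (hs : B.IsSymm) :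
    B.det ≠ 0 := by
  have hne : ∀ i j, B i j ≠ 0 := fun i j => (hB i j).1
  have hod : ∀ i j, i ≠ j → (B i j).order = 0 := fun i j h => by
    rw [(hB i j).2, hA, if_neg h]
  have hdi : ∀ i, (B i i).order = 1 := fun i => by
    rw [(hB i i).2, hA, if_pos rfl]
  have e10 : B 1 0 = B 0 1 := hs.apply 0 1
  have e20 : B 2 0 = B 0 2 := hs.apply 0 2
  have e21 : B 2 1 = B 1 2 := hs.apply 1 2
  have o01 : (B 0 1).order = 0 := hod 0 1 (by decide)
  have o02 : (B 0 2).order = 0 := hod 0 2 (by decide)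
  have o12 : (B 1 2).order = 0 := hod 1 2 (by decide)
  have key : (B.det).coeff 0 =
      2 * ((B 0 1).coeff 0 * ((B 1 2).coeff 0 * (B 0 2).coeff 0)) := by
    rw [Matrix.det_fin_three, e10, e20, e21]
    have z1 : (B 0 0 * B 1 1 * B 2 2).coeff 0 = 0 := by
      apply HahnSeries.coeff_eq_zero_of_lt_order
      rw [HahnSeries.order_mul (mul_ne_zero (hne 0 0) (hne 1 1)) (hne 2 2),
          HahnSeries.order_mul (hne 0 0) (hne 1 1), hdi, hdi, hdi]
      norm_num
    have z2 : (B 0 0 * B 1 2 * B 1 2).coeff 0 = 0 := by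
      apply HahnSeries.coeff_eq_zero_of_lt_order
      rw [HahnSeries.order_mul (mul_ne_zero (hne 0 0) (hne 1 2)) (hne 1 2),
          HahnSeries.order_mul (hne 0 0) (hne 1 2), hdi, o12]
      norm_num
    have z3 : (B 0 1 * B 0 1 * B 2 2).coeff 0 = 0 := by
      apply HahnSeries.coeff_eq_zero_of_lt_order
      rw [HahnSeries.order_mul (mul_ne_zero (hne 0 1) (hne 0 1)) (hne 2 2),
          HahnSeries.order_mul (hne 0 1) (hne 0 1), hdi, o01]
      norm_num
    have z6 : (B 0 2 * B 1 1 * B 0 2).coeff 0 = 0 := by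
      apply HahnSeries.coeff_eq_zero_of_lt_order
      rw [HahnSeries.order_mul (mul_ne_zero (hne 0 2) (hne 1 1)) (hne 0 2),
          HahnSeries.order_mul (hne 0 2) (hne 1 1), hdi, o02]
      norm_num
    have o0112 : (B 0 1 * B 1 2).order = 0 := by
      rw [HahnSeries.order_mul (hne 0 1) (hne 1 2), o01, o12, add_zero]
    have o0201 : (B 0 2 * B 0 1).order = 0 := by
      rw [HahnSeries.order_mul (hne 0 2) (hne 0 1), o02, o01, add_zero]
    have p4 : (B 0 1 * B 1 2 * B 0 2).coeff 0 =
        (B 0 1).coeff 0 * (B 1 2).coeff 0 * (B 0 2).coeff 0 := by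
      rw [aux_mul_coeff_zero o0112 o02, aux_mul_coeff_zero o01 o12]
    have p5 : (B 0 2 * B 0 1 * B 1 2).coeff 0 =
        (B 0 2).coeff 0 * (B 0 1).coeff 0 * (B 1 2).coeff 0 := by
      rw [aux_mul_coeff_zero o0201 o12, aux_mul_coeff_zero o02 o01]
    simp only [HahnSeries.coeff_sub, HahnSeries.coeff_add, z1, z2, z3, z6, p4, p5]
    ring
  intro h
  have c01 : (B 0 1).coeff 0 ≠ 0 := by
    have := HahnSeries.coeff_order_eq_zero.not.2 (hne 0 1); rwa [o01] at this
  have c02 : (B 0 2).coeff 0 ≠ 0 := by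
    have := HahnSeries.coeff_order_eq_zero.not.2 (hne 0 2); rwa [o02] at this
  have c12 : (B 1 2).coeff 0 ≠ 0 := by
    have := HahnSeries.coeff_order_eq_zero.not.2 (hne 1 2); rwa [o12] at this
  rw [h, HahnSeries.coeff_zero] at key
  exact (mul_ne_zero two_ne_zero (mul_ne_zero c01 (mul_ne_zero c12 c02))) key.symm

lemma aux_two_le_rank_of_lift {A : Matrix (Fin 3) (Fin 3) ℝ}
    (hA : ∀ i j, A i j = if i = j then 1 else 0)
    {B : Matrix (Fin 3) (Fin 3) K} (hB : IsLift A B) : 2 ≤ B.rank := by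
  have hne : ∀ i j, B i j ≠ 0 := fun i j => (hB i j).1
  have hd : B 0 0 * B 1 1 - B 0 1 * B 1 0 ≠ 0 := by
    intro h
    have he : B 0 0 * B 1 1 = B 0 1 * B 1 0 := sub_eq_zero.mp h
    have o1 : (B 0 0 * B 1 1).order = 2 := by
      rw [HahnSeries.order_mul (hne 0 0) (hne 1 1), (hB 0 0).2, (hB 1 1).2, hA, hA]
      norm_num
    have o2 : (B 0 1 * B 1 0).order = 0 := by
      rw [HahnSeries.order_mul (hne 0 1) (hne 1 0), (hB 0 1).2, (hB 1 0).2, hA, hA]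
      norm_num
    rw [he, o2] at o1
    norm_num at o1
  set P : Matrix (Fin 2) (Fin 3) K := !![1,0,0;0,1,0] with hP
  set Q : Matrix (Fin 3) (Fin 2) K := !![1,0;0,1;0,0] with hQ
  have hM : P * B * Q = !![B 0 0, B 0 1; B 1 0, B 1 1] := by
    refine Matrix.ext fun i j => ?_
    fin_cases i <;> fin_cases j <;>
      simp only [hP, hQ, Matrix.mul_apply, Fin.sum_univ_three, Fin.sum_univ_two,
        Matrix.cons_val_zero, Matrix.cons_val_one, Matrix.head_cons, Matrix.cons_val_two,
        Matrix.tail_cons, Matrix.of_apply, Matrix.cons_val', Matrix.empty_val',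
        Matrix.cons_val_fin_one, Matrix.head_fin_const, one_mul, zero_mul, mul_one, mul_zero,
        add_zero, zero_add, Fin.mk_zero, Fin.mk_one]
  have hdet : (!![B 0 0, B 0 1; B 1 0, B 1 1]).det ≠ 0 := by
    rw [Matrix.det_fin_two_of]
    exact hd
  have hu : IsUnit (!![B 0 0, B 0 1; B 1 0, B 1 1]) :=
    (Matrix.isUnit_iff_isUnit_det _).mpr (isUnit_iff_ne_zero.mpr hdet)
  have h2 : (!![B 0 0, B 0 1; B 1 0, B 1 1]).rank = 2 := by
    rw [Matrix.rank_of_isUnit _ hu, Fintype.card_fin]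
  calc (2 : ℕ) = (P * B * Q).rank := by rw [hM, h2]
    _ ≤ (P * B).rank := Matrix.rank_mul_le_left _ _
    _ ≤ B.rank := Matrix.rank_mul_le_right _ _

lemma aux_rank_le_two_of_det_eq_zero {B : Matrix (Fin 3) (Fin 3) K}
    (h : B.det = 0) : B.rank ≤ 2 := by
  have h1 : LinearMap.det (Matrix.toLin' B) = 0 := by
    rw [LinearMap.det_toLin', h]
  have h2 := LinearMap.range_lt_top_of_det_eq_zero h1
  rw [Matrix.toLin'_apply'] at h2
  have h3 : B.rank < Module.finrank K (Fin 3 → K) := Submodule.finrank_lt h2.ne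
  have h4 : Module.finrank K (Fin 3 → K) = 3 := by simp
  omega

lemma aux_rank_eq_three_of_det_ne_zero {B : Matrix (Fin 3) (Fin 3) K}
    (h : B.det ≠ 0) : B.rank = 3 := by
  have hu : IsUnit B := (Matrix.isUnit_iff_isUnit_det _).mpr (isUnit_iff_ne_zero.mpr h)
  rw [Matrix.rank_of_isUnit _ hu, Fintype.card_fin]

/-- The `3 × 3` symmetric matrix with diagonal entries `1` and off-diagonal entries
`0` admits a (not necessarily symmetric) lift over `K` with determinant zero, hence has Kapranov
rank `2`; but every symmetric lift has nonzero determinant, hence it has symmetric Kapranov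
rank `3`. -/
theorem stmt19 (A : Matrix (Fin 3) (Fin 3) ℝ)
    (hA : ∀ i j, A i j = if i = j then 1 else 0) :
    (∃ B : Matrix (Fin 3) (Fin 3) K, IsLift A B ∧ B.det = 0) ∧
    kapranovRank A = 2 ∧
    (∀ B : Matrix (Fin 3) (Fin 3) K, IsLift A B → B.IsSymm → B.det ≠ 0) ∧
    symKapranovRank A = 3 := by
  classical
  set t : K := HahnSeries.single (1 : ℝ) (1 : ℂ) with htdef
  have ht0 : t ≠ 0 := HahnSeries.single_ne_zero one_ne_zero
  have hto : t.order = 1 := HahnSeries.order_single one_ne_zero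
  have h1o : (1 : K).order = 0 := HahnSeries.order_one
  have ht2 : t ^ 2 = HahnSeries.single (2 : ℝ) (1 : ℂ) := by
    rw [sq, htdef, HahnSeries.single_mul_single]
    norm_num
  -- the nonsymmetric lift
  set u : K := 2 * t - 1 with hudef
  set v : K := t ^ 2 - t + 1 with hvdef
  have hucoeff : ∀ a : ℝ, u.coeff a =
      2 * (if a = 1 then 1 else 0) - (if a = 0 then 1 else 0) := by
    intro a
    rw [hudef, HahnSeries.coeff_sub, two_mul, HahnSeries.coeff_add, htdef,
      HahnSeries.coeff_single, HahnSeries.coeff_one]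
    ring
  have hvcoeff : ∀ a : ℝ, v.coeff a =
      (if a = 2 then 1 else 0) - (if a = 1 then 1 else 0) + (if a = 0 then 1 else 0) := by
    intro a
    rw [hvdef, HahnSeries.coeff_add, HahnSeries.coeff_sub, ht2, htdef,
      HahnSeries.coeff_single, HahnSeries.coeff_single, HahnSeries.coeff_one]
  have hu0 : u.coeff 0 ≠ 0 := by rw [hucoeff]; norm_num
  have hv0 : v.coeff 0 ≠ 0 := by rw [hvcoeff]; norm_num
  have hune : u ≠ 0 := HahnSeries.ne_zero_of_coeff_ne_zero hu0
  have hvne : v ≠ 0 := HahnSeries.ne_zero_of_coeff_ne_zero hv0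
  have huo : u.order = 0 := by
    refine aux_order_eq_of_coeff hu0 fun a ha => ?_
    rw [hucoeff, if_neg (by linarith), if_neg (by linarith)]
    ring
  have hvo : v.order = 0 := by
    refine aux_order_eq_of_coeff hv0 fun a ha => ?_
    rw [hvcoeff, if_neg (by linarith), if_neg (by linarith), if_neg (by linarith)]
    ring
  set B₀ : Matrix (Fin 3) (Fin 3) K := !![t, 1, 1; 1, t, 1; u, v, t] with hB₀
  have hlift₀ : IsLift A B₀ := by
    intro i j
    fin_cases i <;> fin_cases j <;>
      first
        | exact ⟨ht0, by rw [hA, if_pos rfl]; exact hto⟩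
        | exact ⟨one_ne_zero, by rw [hA, if_neg (by decide)]; exact h1o⟩
        | exact ⟨hune, by rw [hA, if_neg (by decide)]; exact huo⟩
        | exact ⟨hvne, by rw [hA, if_neg (by decide)]; exact hvo⟩
  have hdet₀ : B₀.det = 0 := by
    rw [hB₀, Matrix.det_fin_three]
    simp only [Matrix.cons_val', Matrix.cons_val_zero, Matrix.cons_val_one, Matrix.head_cons,
      Matrix.head_fin_const, Matrix.empty_val', Matrix.cons_val_fin_one, Matrix.cons_val_two,
      Matrix.tail_cons, Matrix.of_apply, hudef, hvdef]
    ring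
  -- the symmetric lift
  set B₁ : Matrix (Fin 3) (Fin 3) K := !![t, 1, 1; 1, t, 1; 1, 1, t] with hB₁
  have hlift₁ : IsLift A B₁ := by
    intro i j
    fin_cases i <;> fin_cases j <;>
      first
        | exact ⟨ht0, by rw [hA, if_pos rfl]; exact hto⟩
        | exact ⟨one_ne_zero, by rw [hA, if_neg (by decide)]; exact h1o⟩
  have hsym₁ : B₁.IsSymm := by
    rw [Matrix.IsSymm]
    refine Matrix.ext fun i j => ?_
    fin_cases i <;> fin_cases j <;> rfl
  refine ⟨⟨B₀, hlift₀, hdet₀⟩, ?_, fun B hB hs => aux_det_ne_zero_of_symm_lift hA hB hs, ?_⟩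
  · have hrank₀ : B₀.rank = 2 :=
      le_antisymm (aux_rank_le_two_of_det_eq_zero hdet₀) (aux_two_le_rank_of_lift hA hlift₀)
    have hmem : 2 ∈ {r | ∃ B : Matrix (Fin 3) (Fin 3) K, IsLift A B ∧ B.rank = r} :=
      ⟨B₀, hlift₀, hrank₀⟩
    refine le_antisymm (Nat.sInf_le hmem) ?_
    obtain ⟨B, hB, hr⟩ := Nat.sInf_mem (⟨2, hmem⟩ :
      Set.Nonempty {r | ∃ B : Matrix (Fin 3) (Fin 3) K, IsLift A B ∧ B.rank = r})
    rw [kapranovRank, ← hr]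
    exact aux_two_le_rank_of_lift hA hB
  · have hne : Set.Nonempty
        {r | ∃ B : Matrix (Fin 3) (Fin 3) K, IsLift A B ∧ B.IsSymm ∧ B.rank = r} :=
      ⟨B₁.rank, B₁, hlift₁, hsym₁, rfl⟩
    obtain ⟨B, hB, hs, hr⟩ := Nat.sInf_mem hne
    rw [symKapranovRank, ← hr]
    exact aux_rank_eq_three_of_det_ne_zero (aux_det_ne_zero_of_symm_lift hA hB hs)


end
end
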